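/- arXiv:2605.21275 — 3 statements merged into one kernel-verified Lean document; each statement's English description precedes it below -/
import Mathlib

section
/- If E₁ and E₂ are Cantor-type sets contained in closed intervals A and B respectively, with thickness τ(E₁) ≥ 1 and τ(E₂) ≥ 1, and 1/3 ≤ |A|/|B| ≤ 3, then the sumset E₁ + E₂ equals the interval A + B. -/
open Pointwise

/-- Left endpoint of the largest closed interval, inside the stage obtained after
removing the gaps `(g i, h i)` for `i < k` from `[lo, hi]`, that contains the
gap `(g k, h k)`. -/
noncomputable def gapLeft (lo : ℝ) (g h : ℕ → ℝ) (k : ℕ) : ℝ :=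
  sSup (insert lo {x : ℝ | ∃ i < k, h i = x ∧ x ≤ g k})

/-- Right endpoint of the largest closed interval, inside the stage obtained after
removing the gaps `(g i, h i)` for `i < k` from `[lo, hi]`, that contains the
gap `(g k, h k)`. -/
noncomputable def gapRight (hi : ℝ) (g h : ℕ → ℝ) (k : ℕ) : ℝ :=
  sInf (insert hi {x : ℝ | ∃ i < k, g i = x ∧ h k ≤ x})

/-- The Cantor-type set on `[lo, hi]` obtained by removing the countable family
of open gaps `(g k, h k)`. -/
def gapCantorSet (lo hi : ℝ) (g h : ℕ → ℝ) : Set ℝ :=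
  Set.Icc lo hi \ ⋃ k, Set.Ioo (g k) (h k)

/-- The thickness of the Cantor-type set on `[lo, hi]` with gaps `(g k, h k)` is
at least `τ`: each (nonempty) gap is at most `1/τ` times the shorter of the two
bridges flanking it at the stage where it is removed. -/
def ThickAtLeast (lo hi : ℝ) (g h : ℕ → ℝ) (τ : ℝ) : Prop :=
  ∀ k, g k < h k →
    τ * (h k - g k) ≤ min (g k - gapLeft lo g h k) (gapRight hi g h k - h k)

/-!
Fix `t ∈ [lo₁ + lo₂, hi₁ + hi₂]` and remove the gaps of both sets together, longest first. We keep
a pair of *linked bridges*: intervals `[a, b]` and `[c, d]` of the current stages with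
`a + c ≤ t ≤ b + d`, each at least as long as every gap of the other set still to be removed.
The base intervals are linked, because thickness `≥ 1` makes every gap at most a third of its base
interval. When the next gap `U` lands in `[a, b]`, the ends of `[a, b]` are ends of the base
interval or of gaps at least as long as `U`, so thickness makes both components of `[a, b] \ U` at
least `|U|` long; as `|U| ≤ d - c`, one of them is still linked with `[c, d]`. Hence every finite
stage contains some `x` with `t - x` in the other stage, and compactness gives `t ∈ E₁ + E₂`.
-/

open Set Function

section GapEnds

variable {lo hi : ℝ} {g h : ℕ → ℝ} {i k : ℕ}

lemma bddAbove_gapLeft_set (lo : ℝ) (g h : ℕ → ℝ) (k : ℕ) :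
    BddAbove (insert lo {x : ℝ | ∃ i < k, h i = x ∧ x ≤ g k}) :=
  BddAbove.insert lo ⟨g k, fun _ ⟨_, _, _, hx⟩ => hx⟩

lemma bddBelow_gapRight_set (hi : ℝ) (g h : ℕ → ℝ) (k : ℕ) :
    BddBelow (insert hi {x : ℝ | ∃ i < k, g i = x ∧ h k ≤ x}) :=
  BddBelow.insert hi ⟨h k, fun _ ⟨_, _, _, hx⟩ => hx⟩

lemma lo_le_gapLeft : lo ≤ gapLeft lo g h k :=
  le_csSup (bddAbove_gapLeft_set lo g h k) (mem_insert _ _)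

lemma le_gapLeft (hik : i < k) (hle : h i ≤ g k) : h i ≤ gapLeft lo g h k :=
  le_csSup (bddAbove_gapLeft_set lo g h k) (mem_insert_of_mem _ ⟨i, hik, rfl, hle⟩)

lemma gapRight_le_hi : gapRight hi g h k ≤ hi :=
  csInf_le (bddBelow_gapRight_set hi g h k) (mem_insert _ _)

lemma gapRight_le (hik : i < k) (hle : h k ≤ g i) : gapRight hi g h k ≤ g i :=
  csInf_le (bddBelow_gapRight_set hi g h k) (mem_insert_of_mem _ ⟨i, hik, rfl, hle⟩)

end GapEnds

namespace ThickAtLeast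

variable {lo hi τ : ℝ} {g h : ℕ → ℝ} {j k : ℕ}

lemma lo_add_mul_le (H : ThickAtLeast lo hi g h τ) (hk : g k < h k) :
    lo + τ * (h k - g k) ≤ g k := by
  linarith [(le_min_iff.1 (H k hk)).1, lo_le_gapLeft (lo := lo) (g := g) (h := h) (k := k)]

lemma add_mul_le_hi (H : ThickAtLeast lo hi g h τ) (hk : g k < h k) :
    h k + τ * (h k - g k) ≤ hi := by
  linarith [(le_min_iff.1 (H k hk)).2, gapRight_le_hi (hi := hi) (g := g) (h := h) (k := k)]

/- Thickness is applied to whichever of the two gaps is removed first; when that is `j`, the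
length comparison transfers the bound to `k`. -/
lemma add_mul_le_of_left (H : ThickAtLeast lo hi g h τ) (hτ : 0 ≤ τ) (hj : g j < h j)
    (hk : g k < h k) (hjk : h j ≤ g k) (hlen : h k - g k ≤ h j - g j) :
    h j + τ * (h k - g k) ≤ g k := by
  rcases lt_trichotomy j k with hlt | rfl | hgt
  · linarith [(le_min_iff.1 (H k hk)).1, le_gapLeft (lo := lo) hlt hjk]
  · linarith
  · linarith [(le_min_iff.1 (H j hj)).2, gapRight_le (hi := hi) hgt hjk,
      mul_le_mul_of_nonneg_left hlen hτ]

lemma add_mul_le_of_right (H : ThickAtLeast lo hi g h τ) (hτ : 0 ≤ τ) (hj : g j < h j)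
    (hk : g k < h k) (hkj : h k ≤ g j) (hlen : h k - g k ≤ h j - g j) :
    h k + τ * (h k - g k) ≤ g j := by
  rcases lt_trichotomy j k with hlt | rfl | hgt
  · linarith [(le_min_iff.1 (H k hk)).2, gapRight_le (hi := hi) hlt hkj]
  · linarith
  · linarith [(le_min_iff.1 (H j hj)).1, le_gapLeft (lo := lo) hgt hkj,
      mul_le_mul_of_nonneg_left hlen hτ]

lemma Ioo_subset_Icc (H : ThickAtLeast lo hi g h τ) (hτ : 0 ≤ τ) (k : ℕ) :
    Ioo (g k) (h k) ⊆ Icc lo hi := by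
  intro x hx
  have hk : g k < h k := hx.1.trans hx.2
  have hτk : 0 ≤ τ * (h k - g k) := mul_nonneg hτ (sub_nonneg.2 hk.le)
  exact ⟨by linarith [H.lo_add_mul_le hk, hx.1], by linarith [H.add_mul_le_hi hk, hx.2]⟩

end ThickAtLeast

lemma finite_setOf_le_sub {lo hi δ : ℝ} {g h : ℕ → ℝ}
    (hsub : ∀ k, Ioo (g k) (h k) ⊆ Icc lo hi)
    (hdisj : Pairwise (Disjoint on fun k => Ioo (g k) (h k))) (hδ : 0 < δ) :
    {k | δ ≤ h k - g k}.Finite := by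
  refine (MeasureTheory.Measure.finite_const_le_meas_of_disjoint_iUnion MeasureTheory.volume
    (ENNReal.ofReal_pos.2 hδ) (fun _ => measurableSet_Ioo) hdisj ?_).subset fun k hk => ?_
  · refine ne_top_of_le_ne_top ?_ (MeasureTheory.measure_mono (iUnion_subset hsub))
    simp
  · rw [mem_ofPred_eq, Real.volume_Ioo]
    exact ENNReal.ofReal_le_ofReal hk

/-- `F` is the set of indices where `ℓ ≥ δ`, up to ties at level `δ`. -/
def IsLevelCut {ι α : Type*} [Preorder α] (ℓ : ι → α) (F : Finset ι) (δ : α) : Prop :=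
  (∀ j ∈ F, δ ≤ ℓ j) ∧ ∀ j ∉ F, ℓ j ≤ δ

namespace IsLevelCut

variable {ι α : Type*} {ℓ : ι → α} {F : Finset ι} {δ δ' : α}

lemma of_le [Preorder α] (H : IsLevelCut ℓ F δ) (hδ : δ ≤ δ') (hF : ∀ j ∈ F, δ' ≤ ℓ j) :
    IsLevelCut ℓ F δ' :=
  ⟨hF, fun j hj => (H.2 j hj).trans hδ⟩

lemma erase [Preorder α] [DecidableEq ι] (H : IsLevelCut ℓ F δ) {k : ι} (hk : k ∈ F)
    (hmin : ∀ j ∈ F, ℓ k ≤ ℓ j) : IsLevelCut ℓ (F.erase k) (ℓ k) := by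
  refine ⟨fun j hj => hmin j (Finset.mem_of_mem_erase hj), fun j hj => ?_⟩
  by_cases hjk : j = k
  · rw [hjk]
  · exact (H.2 j fun hjF => hj (Finset.mem_erase.2 ⟨hjk, hjF⟩)).trans (H.1 k hk)

end IsLevelCut

lemma Set.Finite.isLevelCut_toFinset {ι α : Type*} [LinearOrder α] {ℓ : ι → α} {δ : α}
    (hs : {j | δ ≤ ℓ j}.Finite) : IsLevelCut ℓ hs.toFinset δ :=
  ⟨fun _ hj => hs.mem_toFinset.1 hj, fun _ hj => (not_le.1 (mt hs.mem_toFinset.2 hj)).le⟩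

structure ThickGapFamily where
  lo : ℝ
  hi : ℝ
  g : ℕ → ℝ
  h : ℕ → ℝ
  lo_lt_hi : lo < hi
  pairwise_disjoint : Pairwise (Disjoint on fun k => Ioo (g k) (h k))
  thick : ThickAtLeast lo hi g h 1

namespace ThickGapFamily

variable (S T : ThickGapFamily)

def len (k : ℕ) : ℝ := S.h k - S.g k

def stage (F : Set ℕ) : Set ℝ := Icc S.lo S.hi \ ⋃ k ∈ F, Ioo (S.g k) (S.h k)

structure IsBridge (F : Finset ℕ) (a b : ℝ) : Prop where
  le : a ≤ b
  subset : Icc a b ⊆ S.stage F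
  left : a = S.lo ∨ ∃ j ∈ F, S.h j = a
  right : b = S.hi ∨ ∃ j ∈ F, S.g j = b

def LinkedBridges (F G : Finset ℕ) (t : ℝ) : Prop :=
  ∃ a b c d, S.IsBridge F a b ∧ T.IsBridge G c d ∧ a + c ≤ t ∧ t ≤ b + d ∧
    (∀ j ∉ F, S.len j ≤ d - c) ∧ (∀ j ∉ G, T.len j ≤ b - a)

lemma isClosed_stage (F : Set ℕ) : IsClosed (S.stage F) :=
  isClosed_Icc.sdiff (isOpen_biUnion fun _ _ => isOpen_Ioo)

lemma stage_anti : Antitone S.stage :=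
  fun _ _ hFF' => sdiff_subset_sdiff_right (biUnion_subset_biUnion_left hFF')

lemma three_mul_len_le (k : ℕ) : 3 * S.len k ≤ S.hi - S.lo := by
  unfold len
  rcases lt_or_ge (S.g k) (S.h k) with hk | hk
  · linarith [S.thick.lo_add_mul_le hk, S.thick.add_mul_le_hi hk]
  · linarith [S.lo_lt_hi]

lemma finite_setOf_le_len {δ : ℝ} (hδ : 0 < δ) : {k | δ ≤ S.len k}.Finite :=
  finite_setOf_le_sub (S.thick.Ioo_subset_Icc zero_le_one) S.pairwise_disjoint hδ

lemma h_le_g_or_h_le_g {j k : ℕ} (hjk : j ≠ k) (hj : S.g j < S.h j) (hk : S.g k < S.h k) :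
    S.h j ≤ S.g k ∨ S.h k ≤ S.g j := by
  have := Ioo_disjoint_Ioo.1 (S.pairwise_disjoint hjk)
  rw [min_le_iff, le_max_iff, le_max_iff] at this
  by_contra! hne
  rcases this with (h1 | h1) | (h1 | h1) <;> linarith [hne.1, hne.2]

lemma mem_gapCantorSet_of_forall_mem_stage {x : ℝ}
    (hx : ∀ n : ℕ, x ∈ S.stage {j | 1 / ((n : ℝ) + 1) ≤ S.len j}) :
    x ∈ gapCantorSet S.lo S.hi S.g S.h := by
  refine ⟨(hx 0).1, ?_⟩
  simp only [mem_iUnion, not_exists]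
  intro k hxk
  obtain ⟨n, hn⟩ := exists_nat_one_div_lt (sub_pos.2 (hxk.1.trans hxk.2))
  exact (hx n).2 (mem_biUnion (show 1 / ((n : ℝ) + 1) ≤ S.len k from hn.le) hxk)

variable {S T} {F G : Finset ℕ} {k : ℕ} {a b t : ℝ}

lemma isBridge_empty : S.IsBridge ∅ S.lo S.hi :=
  ⟨S.lo_lt_hi.le, by simp [stage], Or.inl rfl, Or.inl rfl⟩

lemma subset_stage_of_erase {s : Set ℝ} (hs : s ⊆ S.stage (F.erase k))
    (hdisj : Disjoint s (Ioo (S.g k) (S.h k))) : s ⊆ S.stage F := by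
  intro x hx
  refine ⟨(hs hx).1, ?_⟩
  simp only [mem_iUnion, not_exists, Finset.mem_coe]
  intro j hj hxj
  by_cases hjk : j = k
  · exact disjoint_left.1 hdisj hx (hjk ▸ hxj)
  · exact (hs hx).2 (mem_biUnion (Finset.mem_erase.2 ⟨hjk, hj⟩) hxj)

namespace IsBridge

lemma of_erase (H : S.IsBridge (F.erase k) a b)
    (hsep : b ≤ S.g k ∨ S.h k ≤ a) : S.IsBridge F a b where
  le := H.le
  subset := subset_stage_of_erase H.subset <| disjoint_left.2 fun x hx hx' => by
    rcases hsep with hb | ha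
    · exact lt_irrefl _ (hx'.1.trans_le (hx.2.trans hb))
    · exact lt_irrefl _ (hx'.2.trans_le (ha.trans hx.1))
  left := H.left.imp_right fun ⟨j, hj, e⟩ => ⟨j, Finset.mem_of_mem_erase hj, e⟩
  right := H.right.imp_right fun ⟨j, hj, e⟩ => ⟨j, Finset.mem_of_mem_erase hj, e⟩

lemma erase_left (hk : k ∈ F) (H : S.IsBridge (F.erase k) a b) (hak : a ≤ S.g k)
    (hkb : S.g k ≤ b) : S.IsBridge F a (S.g k) where
  le := hak
  subset := subset_stage_of_erase ((Icc_subset_Icc_right hkb).trans H.subset) <|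
    disjoint_left.2 fun _ hx hx' => lt_irrefl _ (hx'.1.trans_le hx.2)
  left := H.left.imp_right fun ⟨j, hj, e⟩ => ⟨j, Finset.mem_of_mem_erase hj, e⟩
  right := Or.inr ⟨k, hk, rfl⟩

lemma erase_right (hk : k ∈ F) (H : S.IsBridge (F.erase k) a b) (hak : a ≤ S.h k)
    (hkb : S.h k ≤ b) : S.IsBridge F (S.h k) b where
  le := hkb
  subset := subset_stage_of_erase ((Icc_subset_Icc_left hak).trans H.subset) <|
    disjoint_left.2 fun _ hx hx' => lt_irrefl _ (hx'.2.trans_le hx.1)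
  left := Or.inr ⟨k, hk, rfl⟩
  right := H.right.imp_right fun ⟨j, hj, e⟩ => ⟨j, Finset.mem_of_mem_erase hj, e⟩

end IsBridge

lemma add_len_le_of_left_end (hk : 0 < S.len k) (hmin : ∀ j ∈ F, S.len k ≤ S.len j)
    (ha : a = S.lo ∨ ∃ j ∈ F.erase k, S.h j = a) (hak : a < S.h k) : a + S.len k ≤ S.g k := by
  unfold len at *
  have hk' : S.g k < S.h k := sub_pos.1 hk
  rcases ha with rfl | ⟨j, hj, rfl⟩
  · simpa using S.thick.lo_add_mul_le hk'
  · obtain ⟨hjk, hjF⟩ := Finset.mem_erase.1 hj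
    have hj' : S.g j < S.h j := by linarith [hmin j hjF]
    have hjk' : S.h j ≤ S.g k := (S.h_le_g_or_h_le_g hjk hj' hk').resolve_right (by linarith)
    simpa using S.thick.add_mul_le_of_left zero_le_one hj' hk' hjk' (hmin j hjF)

lemma add_len_le_of_right_end (hk : 0 < S.len k) (hmin : ∀ j ∈ F, S.len k ≤ S.len j)
    (hb : b = S.hi ∨ ∃ j ∈ F.erase k, S.g j = b) (hkb : S.g k < b) : S.h k + S.len k ≤ b := by
  unfold len at *
  have hk' : S.g k < S.h k := sub_pos.1 hk
  rcases hb with rfl | ⟨j, hj, rfl⟩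
  · simpa using S.thick.add_mul_le_hi hk'
  · obtain ⟨hjk, hjF⟩ := Finset.mem_erase.1 hj
    have hj' : S.g j < S.h j := by linarith [hmin j hjF]
    have hkj : S.h k ≤ S.g j := (S.h_le_g_or_h_le_g hjk hj' hk').resolve_left (by linarith)
    simpa using S.thick.add_mul_le_of_right zero_le_one hj' hk' hkj (hmin j hjF)

namespace LinkedBridges

lemma swap (H : S.LinkedBridges T F G t) : T.LinkedBridges S G F t := by
  obtain ⟨a, b, c, d, hB, hC, hac, hbd, hS, hT⟩ := H
  exact ⟨c, d, a, b, hC, hB, by linarith, by linarith, hT, hS⟩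

lemma of_erase (hkF : k ∈ F) (hk : 0 < S.len k) (hmin : ∀ j ∈ F, S.len k ≤ S.len j)
    (hG : ∀ j ∉ G, T.len j ≤ S.len k) (H : S.LinkedBridges T (F.erase k) G t) :
    S.LinkedBridges T F G t := by
  obtain ⟨a, b, c, d, hB, hC, hac, hbd, hS, hT⟩ := H
  have hkd : S.len k ≤ d - c := hS k (Finset.notMem_erase k F)
  have hS' : ∀ j ∉ F, S.len j ≤ d - c := fun j hj => hS j (mt Finset.mem_of_mem_erase hj)
  by_cases hmeet : S.g k < b ∧ a < S.h k
  · have hleft := add_len_le_of_left_end hk hmin hB.left hmeet.2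
    have hright := add_len_le_of_right_end hk hmin hB.right hmeet.1
    by_cases ht : t ≤ S.g k + d
    · exact ⟨a, S.g k, c, d, hB.erase_left hkF (by linarith) hmeet.1.le, hC, hac, ht, hS',
        fun j hj => by linarith [hG j hj]⟩
    · refine ⟨S.h k, b, c, d, hB.erase_right hkF hmeet.2.le (by linarith), hC, ?_, hbd, hS',
        fun j hj => by linarith [hG j hj]⟩
      unfold len at hkd
      linarith
  · rw [not_and_or, not_lt, not_lt] at hmeet
    exact ⟨a, b, c, d, hB.of_erase hmeet, hC, hac, hbd, hS', hT⟩

lemma exists_mem_stage (H : S.LinkedBridges T F G t) : ∃ x ∈ S.stage F, t - x ∈ T.stage G := by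
  obtain ⟨a, b, c, d, hB, hC, hac, hbd, -, -⟩ := H
  have hx : max a (t - d) ≤ t - c := max_le (by linarith) (by linarith [hC.le])
  exact ⟨max a (t - d), hB.subset ⟨le_max_left _ _, max_le hB.le (by linarith)⟩,
    hC.subset ⟨by linarith, by linarith [le_max_right a (t - d)]⟩⟩

end LinkedBridges

lemma linkedBridges_empty (hST : S.hi - S.lo ≤ 3 * (T.hi - T.lo))
    (hTS : T.hi - T.lo ≤ 3 * (S.hi - S.lo)) (ht : t ∈ Icc (S.lo + T.lo) (S.hi + T.hi)) :
    S.LinkedBridges T ∅ ∅ t :=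
  ⟨S.lo, S.hi, T.lo, T.hi, isBridge_empty, isBridge_empty, ht.1, ht.2,
    fun j _ => by linarith [S.three_mul_len_le j], fun j _ => by linarith [T.three_mul_len_le j]⟩

lemma linkedBridges_of_isLevelCut (hST : S.hi - S.lo ≤ 3 * (T.hi - T.lo))
    (hTS : T.hi - T.lo ≤ 3 * (S.hi - S.lo)) (ht : t ∈ Icc (S.lo + T.lo) (S.hi + T.hi))
    {δ : ℝ} (hδ : 0 < δ) (hF : IsLevelCut S.len F δ) (hG : IsLevelCut T.len G δ) :
    S.LinkedBridges T F G t := by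
  obtain ⟨n, hn⟩ : ∃ n, F.card + G.card = n := ⟨_, rfl⟩
  induction n generalizing F G δ with
  | zero =>
    obtain ⟨rfl, rfl⟩ : F = ∅ ∧ G = ∅ := by
      rw [← Finset.card_eq_zero, ← Finset.card_eq_zero]; omega
    exact linkedBridges_empty hST hTS ht
  | succ n ih =>
    obtain ⟨x, hx, hmin⟩ := (F.disjSum G).exists_min_image (Sum.elim S.len T.len)
      (by rw [← Finset.card_pos, Finset.card_disjSum]; omega)
    rcases x with k | k
    · rw [Finset.inl_mem_disjSum] at hx
      have hminF : ∀ j ∈ F, S.len k ≤ S.len j := fun j hj => hmin (.inl j) (by simpa)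
      have hminG : ∀ j ∈ G, S.len k ≤ T.len j := fun j hj => hmin (.inr j) (by simpa)
      have hδk := hF.1 k hx
      have hcard : (F.erase k).card + G.card = n := by
        rw [← Finset.card_erase_add_one hx] at hn; omega
      exact .of_erase hx (by linarith) hminF (fun j hj => (hG.2 j hj).trans hδk)
        (ih (by linarith) (hF.erase hx hminF) (hG.of_le hδk hminG) hcard)
    · rw [Finset.inr_mem_disjSum] at hx
      have hminG : ∀ j ∈ G, T.len k ≤ T.len j := fun j hj => hmin (.inr j) (by simpa)
      have hminF : ∀ j ∈ F, T.len k ≤ S.len j := fun j hj => hmin (.inl j) (by simpa)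
      have hδk := hG.1 k hx
      have hcard : F.card + (G.erase k).card = n := by
        rw [← Finset.card_erase_add_one hx] at hn; omega
      exact (LinkedBridges.of_erase hx (by linarith) hminG (fun j hj => (hF.2 j hj).trans hδk)
        (ih (by linarith) (hF.of_le hδk hminF) (hG.erase hx hminG) hcard).swap).swap

lemma exists_mem_stage_setOf_le_len (hST : S.hi - S.lo ≤ 3 * (T.hi - T.lo))
    (hTS : T.hi - T.lo ≤ 3 * (S.hi - S.lo)) (ht : t ∈ Icc (S.lo + T.lo) (S.hi + T.hi))
    {δ : ℝ} (hδ : 0 < δ) :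
    ∃ x ∈ S.stage {j | δ ≤ S.len j}, t - x ∈ T.stage {j | δ ≤ T.len j} := by
  have hS := S.finite_setOf_le_len hδ
  have hT := T.finite_setOf_le_len hδ
  simpa only [Set.Finite.coe_toFinset] using (linkedBridges_of_isLevelCut hST hTS ht hδ
    hS.isLevelCut_toFinset hT.isLevelCut_toFinset).exists_mem_stage

lemma exists_mem_gapCantorSet_sub_mem (hST : S.hi - S.lo ≤ 3 * (T.hi - T.lo))
    (hTS : T.hi - T.lo ≤ 3 * (S.hi - S.lo)) (ht : t ∈ Icc (S.lo + T.lo) (S.hi + T.hi)) :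
    ∃ x ∈ gapCantorSet S.lo S.hi S.g S.h, t - x ∈ gapCantorSet T.lo T.hi T.g T.h := by
  let K : ℕ → Set ℝ := fun n => S.stage {j | 1 / ((n : ℝ) + 1) ≤ S.len j} ∩
    (t - ·) ⁻¹' T.stage {j | 1 / ((n : ℝ) + 1) ≤ T.len j}
  have hKclosed : ∀ n, IsClosed (K n) := fun n =>
    (S.isClosed_stage _).inter ((T.isClosed_stage _).preimage (continuous_sub_left t))
  have hKanti : ∀ n, K (n + 1) ⊆ K n := by
    intro n
    have hδ : 1 / ((n + 1 : ℕ) + 1 : ℝ) ≤ 1 / ((n : ℝ) + 1) := by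
      gcongr; simp
    exact inter_subset_inter (S.stage_anti fun j hj => hδ.trans hj)
      (preimage_mono (T.stage_anti fun j hj => hδ.trans hj))
  have hK : ∀ n, (K n).Nonempty := fun n =>
    exists_mem_stage_setOf_le_len hST hTS ht Nat.one_div_pos_of_nat
  obtain ⟨x, hx⟩ := IsCompact.nonempty_iInter_of_sequence_nonempty_isCompact_isClosed K hKanti hK
    (isCompact_Icc.of_isClosed_subset (hKclosed 0) fun _ hx => hx.1.1) hKclosed
  rw [mem_iInter] at hx
  exact ⟨x, S.mem_gapCantorSet_of_forall_mem_stage fun n => (hx n).1,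
    T.mem_gapCantorSet_of_forall_mem_stage fun n => (hx n).2⟩

theorem gapCantorSet_add_gapCantorSet (hST : S.hi - S.lo ≤ 3 * (T.hi - T.lo))
    (hTS : T.hi - T.lo ≤ 3 * (S.hi - S.lo)) :
    gapCantorSet S.lo S.hi S.g S.h + gapCantorSet T.lo T.hi T.g T.h =
      Icc (S.lo + T.lo) (S.hi + T.hi) := by
  refine ((add_subset_add sdiff_subset sdiff_subset).trans (Icc_add_Icc_subset _ _ _ _)).antisymm
    fun t ht => ?_
  obtain ⟨x, hx, hx'⟩ := exists_mem_gapCantorSet_sub_mem hST hTS ht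
  exact ⟨x, hx, t - x, hx', add_sub_cancel x t⟩

end ThickGapFamily

theorem hall_sumset_general (lo₁ hi₁ lo₂ hi₂ : ℝ) (g₁ h₁ g₂ h₂ : ℕ → ℝ)
    (hI₁ : lo₁ < hi₁) (hI₂ : lo₂ < hi₂)
    (hdisj₁ : Pairwise (Function.onFun Disjoint fun k => Set.Ioo (g₁ k) (h₁ k)))
    (hdisj₂ : Pairwise (Function.onFun Disjoint fun k => Set.Ioo (g₂ k) (h₂ k)))
    (hthick₁ : ThickAtLeast lo₁ hi₁ g₁ h₁ 1) (hthick₂ : ThickAtLeast lo₂ hi₂ g₂ h₂ 1)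
    (hratio₁ : 1 / 3 ≤ (hi₁ - lo₁) / (hi₂ - lo₂))
    (hratio₂ : (hi₁ - lo₁) / (hi₂ - lo₂) ≤ 3) :
    gapCantorSet lo₁ hi₁ g₁ h₁ + gapCantorSet lo₂ hi₂ g₂ h₂ =
      Set.Icc (lo₁ + lo₂) (hi₁ + hi₂) := by
  have hlen₂ : 0 < hi₂ - lo₂ := sub_pos.2 hI₂
  have h₁₂ := (div_le_iff₀ hlen₂).1 hratio₂
  have h₂₁ := (le_div_iff₀ hlen₂).1 hratio₁
  exact ThickGapFamily.gapCantorSet_add_gapCantorSet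
    (S := ⟨lo₁, hi₁, g₁, h₁, hI₁, hdisj₁, hthick₁⟩) (T := ⟨lo₂, hi₂, g₂, h₂, hI₂, hdisj₂, hthick₂⟩)
    h₁₂ (by linarith)

/-- Hall's sumset theorem (Newhouse gap lemma): the sum of two Cantor-type sets of
thickness at least 1 whose base intervals have comparable lengths is the sum of
the base intervals. -/
theorem hall_sumset (lo₁ hi₁ lo₂ hi₂ : ℝ) (g₁ h₁ g₂ h₂ : ℕ → ℝ)
    (hI₁ : lo₁ < hi₁) (hI₂ : lo₂ < hi₂)
    (hgap₁ : ∀ k, g₁ k ≤ h₁ k) (hgap₂ : ∀ k, g₂ k ≤ h₂ k)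
    (hsub₁ : ∀ k, Set.Ioo (g₁ k) (h₁ k) ⊆ Set.Icc lo₁ hi₁)
    (hsub₂ : ∀ k, Set.Ioo (g₂ k) (h₂ k) ⊆ Set.Icc lo₂ hi₂)
    (hdisj₁ : Pairwise (Function.onFun Disjoint fun k => Set.Ioo (g₁ k) (h₁ k)))
    (hdisj₂ : Pairwise (Function.onFun Disjoint fun k => Set.Ioo (g₂ k) (h₂ k)))
    (hthick₁ : ThickAtLeast lo₁ hi₁ g₁ h₁ 1) (hthick₂ : ThickAtLeast lo₂ hi₂ g₂ h₂ 1)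
    (hratio₁ : 1 / 3 ≤ (hi₁ - lo₁) / (hi₂ - lo₂))
    (hratio₂ : (hi₁ - lo₁) / (hi₂ - lo₂) ≤ 3) :
    gapCantorSet lo₁ hi₁ g₁ h₁ + gapCantorSet lo₂ hi₂ g₂ h₂ =
      Set.Icc (lo₁ + lo₂) (hi₁ + hi₂) :=
  hall_sumset_general lo₁ hi₁ lo₂ hi₂ g₁ h₁ g₂ h₂ hI₁ hI₂ hdisj₁ hdisj₂ hthick₁ hthick₂ hratio₁
    hratio₂
end

section
/- If E is a Cantor-type set contained in a closed interval A ⊂ (0, ∞) such that log E = {log x : x ∈ E} has thickness strictly greater than 1, then the product set E·E = {xy : x, y ∈ E} equals the interval A·A = [ (inf A)², (sup A)² ]. -/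
open Pointwise

namespace PIProof

open Set

structure Sys (τ : ℝ) where
  a : ℝ
  b : ℝ
  G : ℕ → ℝ
  H : ℕ → ℝ
  inA : ∀ k, G k < H k → a ≤ G k ∧ H k ≤ b
  disj : ∀ i j, i ≠ j → ∀ x, x ∈ Set.Ioo (G i) (H i) → x ∉ Set.Ioo (G j) (H j)
  edge : ∀ k, G k < H k → τ * (H k - G k) ≤ G k - a ∧ τ * (H k - G k) ≤ b - H k
  pair : ∀ i j, G i < H i → G j < H j → H i ≤ G j →
    τ * (if i < j then H j - G j else H i - G i) ≤ G j - H i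

/-- Invariant for a bridge `[p,q]` of the system, with `m` a current gap-size bound. -/
def Sys.Inv {τ : ℝ} (S : Sys τ) (s : Finset ℕ) (p q m : ℝ) : Prop :=
  (∀ i ∈ s, S.H i - S.G i ≤ m) ∧
  (p = S.a ∨ ∃ i, S.G i < S.H i ∧ p = S.H i ∧ m ≤ S.H i - S.G i) ∧
  (q = S.b ∨ ∃ i, S.G i < S.H i ∧ q = S.G i ∧ m ≤ S.H i - S.G i)

lemma Sys.flank_left {τ : ℝ} (hτ : 0 < τ) (S : Sys τ) {p m : ℝ}
    (hw : p = S.a ∨ ∃ i, S.G i < S.H i ∧ p = S.H i ∧ m ≤ S.H i - S.G i)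
    {k : ℕ} (hk : S.G k < S.H k) (hkm : S.H k - S.G k ≤ m) (hpk : p ≤ S.G k) :
    τ * (S.H k - S.G k) ≤ S.G k - p := by
  rcases hw with rfl | ⟨i, hi, rfl, him⟩
  · exact (S.edge k hk).1
  · have hik : i ≠ k := by rintro rfl; exact absurd hpk (not_le.2 hk)
    rcases lt_or_gt_of_ne hik with hlt | hgt
    · have := S.pair i k hi hk hpk
      rwa [if_pos hlt] at this
    · have h2 := S.pair i k hi hk hpk
      rw [if_neg (by omega)] at h2
      nlinarith
lemma Sys.flank_right {τ : ℝ} (hτ : 0 < τ) (S : Sys τ) {q m : ℝ}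
    (hw : q = S.b ∨ ∃ i, S.G i < S.H i ∧ q = S.G i ∧ m ≤ S.H i - S.G i)
    {k : ℕ} (hk : S.G k < S.H k) (hkm : S.H k - S.G k ≤ m) (hqk : S.H k ≤ q) :
    τ * (S.H k - S.G k) ≤ q - S.H k := by
  rcases hw with rfl | ⟨i, hi, rfl, him⟩
  · exact (S.edge k hk).2
  · have hik : k ≠ i := by rintro rfl; exact absurd hqk (not_le.2 hk)
    rcases lt_or_gt_of_ne hik with hlt | hgt
    · have h2 := S.pair k i hk hi hqk
      rw [if_pos hlt] at h2
      nlinarith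
    · have h2 := S.pair k i hk hi hqk
      rwa [if_neg (by omega)] at h2

lemma Sys.inside {τ : ℝ} (S : Sys τ) {p q m : ℝ} {s : Finset ℕ} (hI : S.Inv s p q m)
    {k : ℕ} (hk : S.G k < S.H k) (h1 : S.G k < q) (h2 : p < S.H k) :
    p ≤ S.G k ∧ S.H k ≤ q := by
  constructor
  · by_contra hc
    push_neg at hc
    rcases hI.2.1 with rfl | ⟨i, hi, rfl, _⟩
    · exact absurd (S.inA k hk).1 (not_le.2 hc)
    · have hik : i ≠ k := by rintro rfl; exact lt_irrefl _ h2
      set z := (max (S.G i) (S.G k) + S.H i) / 2 with hz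
      have hz1 : max (S.G i) (S.G k) < S.H i := max_lt hi hc
      have : z ∈ Set.Ioo (S.G i) (S.H i) := by
        constructor
        · have := le_max_left (S.G i) (S.G k); simp only [hz]; linarith
        · simp only [hz]; linarith
      refine S.disj i k hik z this ?_ |>.elim
      constructor
      · have := le_max_right (S.G i) (S.G k); simp only [hz]; linarith
      · simp only [hz]; linarith [h2]
  · by_contra hc
    push_neg at hc
    rcases hI.2.2 with rfl | ⟨i, hi, rfl, _⟩
    · exact absurd (S.inA k hk).2 (not_le.2 hc)
    · have hik : i ≠ k := by rintro rfl; exact lt_irrefl _ h1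
      set z := (S.G i + min (S.H i) (S.H k)) / 2 with hz
      have hz1 : S.G i < min (S.H i) (S.H k) := lt_min hi hc
      have : z ∈ Set.Ioo (S.G i) (S.H i) := by
        constructor
        · simp only [hz]; linarith
        · have := min_le_left (S.H i) (S.H k); simp only [hz]; linarith
      refine S.disj i k hik z this ?_ |>.elim
      constructor
      · simp only [hz]; linarith
      · have := min_le_right (S.H i) (S.H k); simp only [hz]; linarith


section Bridge
variable {τ : ℝ}

/-- Conclusion of the bridge lemma. -/
def Concl (S T : Sys τ) (s₁ s₂ : Finset ℕ) (p q p' q' : ℝ) : Prop :=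
  ∃ x, p ≤ x ∧ x ≤ q ∧ p' ≤ x ∧ x ≤ q' ∧
    (∀ i ∈ s₁, x ∉ Set.Ioo (S.G i) (S.H i)) ∧
    (∀ j ∈ s₂, x ∉ Set.Ioo (T.G j) (T.H j))

/-- Full inductive statement. -/
def Stmt (S T : Sys τ) (s₁ s₂ : Finset ℕ) : Prop :=
  ∀ p q p' q' m : ℝ, 0 ≤ m →
    τ * m ≤ q - p → τ * m ≤ q' - p' → p' ≤ q → p ≤ q' →
    S.Inv s₁ p q m → T.Inv s₂ p' q' m →
    Concl S T s₁ s₂ p q p' q'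

lemma Stmt.swap {S T : Sys τ} {s₁ s₂ : Finset ℕ} (h : Stmt S T s₁ s₂) :
    Stmt T S s₂ s₁ := by
  intro p q p' q' m hm h1 h2 h3 h4 hT hS
  obtain ⟨x, hx1, hx2, hx3, hx4, hx5, hx6⟩ := h p' q' p q m hm h2 h1 h4 h3 hS hT
  exact ⟨x, hx3, hx4, hx1, hx2, hx6, hx5⟩

lemma bridge_step (hτ : 1 < τ) (S T : Sys τ) (s₁ s₂ : Finset ℕ)
    (k : ℕ) (hk : k ∈ s₁)
    (hmax₁ : ∀ i ∈ s₁, S.H i - S.G i ≤ S.H k - S.G k)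
    (hmax₂ : ∀ j ∈ s₂, T.H j - T.G j ≤ S.H k - S.G k)
    (IH : Stmt S T (s₁.erase k) s₂) : Stmt S T s₁ s₂ := by
  have hτ0 : (0:ℝ) < τ := lt_trans one_pos hτ
  intro p q p' q' m hm h1 h2 h3 h4 hS hT
  have hSe : S.Inv (s₁.erase k) p q m :=
    ⟨fun i hi => hS.1 i (Finset.mem_of_mem_erase hi), hS.2.1, hS.2.2⟩
  by_cases hne : S.G k < S.H k
  swap
  · obtain ⟨x, hx1, hx2, hx3, hx4, hx5, hx6⟩ :=
      IH p q p' q' m hm h1 h2 h3 h4 hSe hT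
    refine ⟨x, hx1, hx2, hx3, hx4, fun i hi hmem => ?_, hx6⟩
    rcases eq_or_ne i k with rfl | hik
    · exact hne (lt_trans hmem.1 hmem.2)
    · exact hx5 i (Finset.mem_erase.2 ⟨hik, hi⟩) hmem
  by_cases hint : S.G k < q ∧ p < S.H k
  swap
  · obtain ⟨x, hx1, hx2, hx3, hx4, hx5, hx6⟩ :=
      IH p q p' q' m hm h1 h2 h3 h4 hSe hT
    refine ⟨x, hx1, hx2, hx3, hx4, fun i hi hmem => ?_, hx6⟩
    rcases eq_or_ne i k with rfl | hik
    · exact hint ⟨lt_of_lt_of_le hmem.1 hx2, lt_of_le_of_lt hx1 hmem.2⟩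
    · exact hx5 i (Finset.mem_erase.2 ⟨hik, hi⟩) hmem
  · obtain ⟨hpG, hHq⟩ := S.inside hS hne hint.1 hint.2
    set sk := S.H k - S.G k with hsk
    have hskpos : 0 < sk := sub_pos.2 hne
    have hskm : sk ≤ m := hS.1 k hk
    have hfl : τ * sk ≤ S.G k - p := S.flank_left hτ0 hS.2.1 hne hskm hpG
    have hfr : τ * sk ≤ q - S.H k := S.flank_right hτ0 hS.2.2 hne hskm hHq
    have hTin : T.Inv s₂ p' q' sk := by
      refine ⟨fun j hj => hmax₂ j hj, ?_, ?_⟩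
      · rcases hT.2.1 with hh | ⟨i, hi, hp, him⟩
        · exact Or.inl hh
        · exact Or.inr ⟨i, hi, hp, le_trans hskm him⟩
      · rcases hT.2.2 with hh | ⟨i, hi, hp, him⟩
        · exact Or.inl hh
        · exact Or.inr ⟨i, hi, hp, le_trans hskm him⟩
    have hnc : p' ≤ S.G k ∨ S.H k ≤ q' := by
      by_contra hcc
      push_neg at hcc
      nlinarith [hcc.1, hcc.2]
    rcases hnc with hc | hc
    · have hSin : S.Inv (s₁.erase k) p (S.G k) sk := by
        refine ⟨fun i hi => hmax₁ i (Finset.mem_of_mem_erase hi), ?_,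
          Or.inr ⟨k, hne, rfl, le_refl _⟩⟩
        rcases hS.2.1 with hh | ⟨i, hi, hp, him⟩
        · exact Or.inl hh
        · exact Or.inr ⟨i, hi, hp, le_trans hskm him⟩
      obtain ⟨x, hx1, hx2, hx3, hx4, hx5, hx6⟩ :=
        IH p (S.G k) p' q' sk hskpos.le hfl (by nlinarith) hc h4 hSin hTin
      refine ⟨x, hx1, le_trans hx2 hint.1.le, hx3, hx4, fun i hi hmem => ?_, hx6⟩
      rcases eq_or_ne i k with rfl | hik
      · exact absurd hmem.1 (not_lt.2 hx2)
      · exact hx5 i (Finset.mem_erase.2 ⟨hik, hi⟩) hmem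
    · have hSin : S.Inv (s₁.erase k) (S.H k) q sk := by
        refine ⟨fun i hi => hmax₁ i (Finset.mem_of_mem_erase hi),
          Or.inr ⟨k, hne, rfl, le_refl _⟩, ?_⟩
        rcases hS.2.2 with hh | ⟨i, hi, hp, him⟩
        · exact Or.inl hh
        · exact Or.inr ⟨i, hi, hp, le_trans hskm him⟩
      obtain ⟨x, hx1, hx2, hx3, hx4, hx5, hx6⟩ :=
        IH (S.H k) q p' q' sk hskpos.le hfr (by nlinarith) h3 hc hSin hTin
      refine ⟨x, le_trans hint.2.le hx1, hx2, hx3, hx4, fun i hi hmem => ?_, hx6⟩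
      rcases eq_or_ne i k with rfl | hik
      · exact absurd hmem.2 (not_lt.2 hx1)
      · exact hx5 i (Finset.mem_erase.2 ⟨hik, hi⟩) hmem
end Bridge

lemma bridge (hτ : 1 < τ) :
    ∀ N : ℕ, ∀ (S T : Sys τ) (s₁ s₂ : Finset ℕ), s₁.card + s₂.card = N → Stmt S T s₁ s₂ := by
  intro N
  induction N with
  | zero =>
    intro S T s₁ s₂ hcard p q p' q' m hm h1 h2 h3 h4 hS hT
    have hs₁ : s₁ = ∅ := Finset.card_eq_zero.1 (by omega)
    have hs₂ : s₂ = ∅ := Finset.card_eq_zero.1 (by omega)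
    subst hs₁; subst hs₂
    have hτm : 0 ≤ τ * m := by nlinarith
    refine ⟨max p p', le_max_left _ _, ?_, le_max_right _ _, ?_, by simp, by simp⟩
    · exact max_le (by linarith) h3
    · exact max_le h4 (by linarith)
  | succ n ih =>
    intro S T s₁ s₂ hcard
    by_cases hs₁ : s₁.Nonempty
    · obtain ⟨k₁, hk₁, hm₁⟩ := s₁.exists_max_image (fun i => S.H i - S.G i) hs₁
      by_cases hs₂ : s₂.Nonempty
      · obtain ⟨k₂, hk₂, hm₂⟩ := s₂.exists_max_image (fun j => T.H j - T.G j) hs₂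
        rcases le_total (T.H k₂ - T.G k₂) (S.H k₁ - S.G k₁) with hcmp | hcmp
        · exact bridge_step hτ S T s₁ s₂ k₁ hk₁ hm₁
            (fun j hj => le_trans (hm₂ j hj) hcmp)
            (ih S T (s₁.erase k₁) s₂ (by
              have h0 : 0 < s₁.card := Finset.card_pos.2 ⟨k₁, hk₁⟩
              rw [Finset.card_erase_of_mem hk₁]; omega))
        · exact (bridge_step hτ T S s₂ s₁ k₂ hk₂ hm₂
            (fun i hi => le_trans (hm₁ i hi) hcmp)
            ((ih S T s₁ (s₂.erase k₂) (by
              have h0 : 0 < s₂.card := Finset.card_pos.2 ⟨k₂, hk₂⟩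
              rw [Finset.card_erase_of_mem hk₂]; omega)).swap)).swap
      · exact bridge_step hτ S T s₁ s₂ k₁ hk₁ hm₁
          (fun j hj => absurd ⟨j, hj⟩ hs₂)
          (ih S T (s₁.erase k₁) s₂ (by
            have h0 : 0 < s₁.card := Finset.card_pos.2 ⟨k₁, hk₁⟩
            rw [Finset.card_erase_of_mem hk₁]; omega))
    · have hs₂ : s₂.Nonempty := by
        rcases Finset.eq_empty_or_nonempty s₂ with rfl | hh
        · exfalso
          rw [Finset.not_nonempty_iff_eq_empty.1 hs₁] at hcard
          simp at hcard
        · exact hh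
      obtain ⟨k₂, hk₂, hm₂⟩ := s₂.exists_max_image (fun j => T.H j - T.G j) hs₂
      exact (bridge_step hτ T S s₂ s₁ k₂ hk₂ hm₂
        (fun i hi => absurd ⟨i, hi⟩ hs₁)
        ((ih S T s₁ (s₂.erase k₂) (by
          have h0 : 0 < s₂.card := Finset.card_pos.2 ⟨k₂, hk₂⟩
          rw [Finset.card_erase_of_mem hk₂]; omega)).swap)).swap

/-- The reflection `x ↦ t - x` of a gap system. -/
def Sys.reflect {τ : ℝ} (S : Sys τ) (t : ℝ) : Sys τ where
  a := t - S.b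
  b := t - S.a
  G := fun k => t - S.H k
  H := fun k => t - S.G k
  inA := by
    intro k hk
    have hk' : S.G k < S.H k := by linarith
    have := S.inA k hk'
    constructor <;> linarith [this.1, this.2]
  disj := by
    intro i j hij x hx1 hx2
    have m1 : t - x ∈ Set.Ioo (S.G i) (S.H i) := ⟨by linarith [hx1.2], by linarith [hx1.1]⟩
    have m2 : t - x ∈ Set.Ioo (S.G j) (S.H j) := ⟨by linarith [hx2.2], by linarith [hx2.1]⟩
    exact S.disj i j hij (t - x) m1 m2
  edge := by
    intro k hk
    have hk' : S.G k < S.H k := by linarith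
    have h1 := (S.edge k hk').1
    have h2 := (S.edge k hk').2
    constructor
    · have : (t - S.G k) - (t - S.H k) = S.H k - S.G k := by ring
      rw [this]; linarith
    · have : (t - S.G k) - (t - S.H k) = S.H k - S.G k := by ring
      rw [this]; linarith
  pair := by
    intro i j hi hj hij
    have hi' : S.G i < S.H i := by linarith
    have hj' : S.G j < S.H j := by linarith
    have hji : S.H j ≤ S.G i := by linarith
    have hp := S.pair j i hj' hi' hji
    rcases lt_trichotomy i j with h | rfl | h
    · rw [if_pos h]
      rw [if_neg (by omega)] at hp
      have e1 : (t - S.G j) - (t - S.H j) = S.H j - S.G j := by ring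
      rw [e1]; linarith
    · exact absurd hji (not_le.2 hi')
    · rw [if_neg (by omega)]
      rw [if_pos h] at hp
      have e1 : (t - S.G i) - (t - S.H i) = S.H i - S.G i := by ring
      rw [e1]; linarith

lemma exists_bound (G H : ℕ → ℝ) (s : Finset ℕ) :
    ∃ m : ℝ, 0 ≤ m ∧ (∀ k ∈ s, H k - G k ≤ m) ∧
      (m = 0 ∨ ∃ k, G k < H k ∧ m = H k - G k) := by
  classical
  induction s using Finset.induction with
  | empty => exact ⟨0, le_refl _, by simp, Or.inl rfl⟩
  | @insert a s₀ ha ih =>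
    obtain ⟨m, hm0, hmb, hmd⟩ := ih
    rcases le_or_gt (H a - G a) m with hle | hlt
    · refine ⟨m, hm0, ?_, hmd⟩
      intro k hk
      rcases Finset.mem_insert.1 hk with rfl | hk
      · exact hle
      · exact hmb k hk
    · refine ⟨H a - G a, by linarith, ?_, Or.inr ⟨a, by linarith, rfl⟩⟩
      intro k hk
      rcases Finset.mem_insert.1 hk with rfl | hk
      · exact le_refl _
      · linarith [hmb k hk]

/-- The core existence result: for `t ∈ [2a, 2b]` there is a point `x` of the
Cantor set with `t - x` also in the Cantor set. -/
lemma sum_core {τ : ℝ} (hτ : 1 < τ) (S : Sys τ) (hab : S.a ≤ S.b)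
    {t : ℝ} (ht1 : S.a + S.a ≤ t) (ht2 : t ≤ S.b + S.b) :
    ∃ x, x ∈ Set.Icc S.a S.b ∧ (∀ k, x ∉ Set.Ioo (S.G k) (S.H k)) ∧
      (t - x) ∈ Set.Icc S.a S.b ∧ (∀ k, (t - x) ∉ Set.Ioo (S.G k) (S.H k)) := by
  have hτ0 : (0:ℝ) < τ := lt_trans one_pos hτ
  set T := S.reflect t with hT
  set K : ℕ → Set ℝ := fun n =>
    ({x | S.a ≤ x ∧ x ≤ S.b ∧ T.a ≤ x ∧ x ≤ T.b} ∩
      ⋂ k ∈ Finset.range n, ((Set.Ioo (S.G k) (S.H k))ᶜ ∩ (Set.Ioo (T.G k) (T.H k))ᶜ))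
    with hK
  have hKclosed : ∀ n, IsClosed (K n) := by
    intro n
    apply IsClosed.inter
    · have : {x : ℝ | S.a ≤ x ∧ x ≤ S.b ∧ T.a ≤ x ∧ x ≤ T.b} =
        Set.Icc S.a S.b ∩ Set.Icc T.a T.b := by
        ext x; simp [Set.mem_Icc]; tauto
      rw [this]
      exact isClosed_Icc.inter isClosed_Icc
    · exact isClosed_biInter fun k _ =>
        (isOpen_Ioo.isClosed_compl).inter (isOpen_Ioo.isClosed_compl)
  have hKsub : ∀ n, K n ⊆ Set.Icc S.a S.b := fun n x hx => ⟨hx.1.1, hx.1.2.1⟩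
  have hKmono : ∀ n, K (n + 1) ⊆ K n := by
    intro n x hx
    refine ⟨hx.1, ?_⟩
    have h2 := hx.2
    rw [Set.mem_iInter₂] at h2 ⊢
    intro k hk
    exact h2 k (Finset.mem_range.2 (lt_trans (Finset.mem_range.1 hk) (Nat.lt_succ_self n)))
  have hKne : ∀ n, (K n).Nonempty := by
    intro n
    obtain ⟨m, hm0, hmb, hmd⟩ := exists_bound S.G S.H (Finset.range n)
    have hba : τ * m ≤ S.b - S.a := by
      rcases hmd with rfl | ⟨k, hk, rfl⟩
      · simpa using hab
      · have h1 := (S.edge k hk).1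
        have h2 := S.inA k hk
        linarith [h2.2]
    have hstmt := bridge hτ ((Finset.range n).card + (Finset.range n).card)
      S T (Finset.range n) (Finset.range n) rfl
    have hTab : T.a = t - S.b ∧ T.b = t - S.a := ⟨rfl, rfl⟩
    have hmT : ∀ j ∈ Finset.range n, T.H j - T.G j ≤ m := by
      intro j hj
      have : T.H j - T.G j = S.H j - S.G j := by
        simp only [hT, Sys.reflect]; ring
      rw [this]; exact hmb j hj
    obtain ⟨x, hx1, hx2, hx3, hx4, hx5, hx6⟩ :=
      hstmt S.a S.b T.a T.b m hm0 (by linarith) (by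
        have : T.b - T.a = S.b - S.a := by simp only [hT, Sys.reflect]; ring
        rw [this]; linarith)
        (by simp only [hT, Sys.reflect]; linarith)
        (by simp only [hT, Sys.reflect]; linarith)
        ⟨hmb, Or.inl rfl, Or.inl rfl⟩ ⟨hmT, Or.inl rfl, Or.inl rfl⟩
    refine ⟨x, ⟨hx1, hx2, hx3, hx4⟩, ?_⟩
    rw [Set.mem_iInter₂]
    intro k hk
    exact ⟨hx5 k hk, hx6 k hk⟩
  obtain ⟨x, hx⟩ := IsCompact.nonempty_iInter_of_sequence_nonempty_isCompact_isClosed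
    K hKmono hKne (IsCompact.of_isClosed_subset isCompact_Icc (hKclosed 0) (hKsub 0))
    hKclosed
  rw [Set.mem_iInter] at hx
  have hmem : ∀ n, x ∈ K n := hx
  have hbase := (hmem 0).1
  have hgaps : ∀ k, x ∉ Set.Ioo (S.G k) (S.H k) ∧ x ∉ Set.Ioo (T.G k) (T.H k) := by
    intro k
    have h2 := (hmem (k + 1)).2
    rw [Set.mem_iInter₂] at h2
    exact h2 k (Finset.mem_range.2 (Nat.lt_succ_self k))
  have hTa : T.a = t - S.b := rfl
  have hTb : T.b = t - S.a := rfl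
  refine ⟨x, ⟨hbase.1, hbase.2.1⟩, fun k => (hgaps k).1, ?_, ?_⟩
  · constructor
    · have := hbase.2.2.2; rw [hTb] at this; linarith
    · have := hbase.2.2.1; rw [hTa] at this; linarith
  · intro k hc
    refine (hgaps k).2 ⟨?_, ?_⟩
    · show t - S.H k < x; linarith [hc.2]
    · show x < t - S.G k; linarith [hc.1]

lemma thick_flanks {a b : ℝ} {G H : ℕ → ℝ} {τ : ℝ}
    (hth : ThickAtLeast a b G H τ)
    (hin : ∀ k, G k < H k → a ≤ G k ∧ H k ≤ b) :
    (∀ k, G k < H k → τ * (H k - G k) ≤ G k - a ∧ τ * (H k - G k) ≤ b - H k) ∧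
    (∀ i j, G i < H i → G j < H j → H i ≤ G j →
      τ * (if i < j then H j - G j else H i - G i) ≤ G j - H i) := by
  have hbddA : ∀ k, BddAbove (insert a {x : ℝ | ∃ i < k, H i = x ∧ x ≤ G k}) := by
    intro k
    refine ⟨max a (G k), ?_⟩
    rintro x hx
    rcases Set.mem_insert_iff.1 hx with rfl | ⟨i, _, _, hx2⟩
    · exact le_max_left _ _
    · exact le_trans hx2 (le_max_right _ _)
  have hbddB : ∀ k, G k < H k → BddBelow (insert b {x : ℝ | ∃ i < k, G i = x ∧ H k ≤ x}) := by
    intro k hk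
    refine ⟨min b (H k), ?_⟩
    rintro x hx
    rcases Set.mem_insert_iff.1 hx with rfl | ⟨i, _, _, hx2⟩
    · exact min_le_left _ _
    · exact le_trans (min_le_right _ _) hx2
  constructor
  · intro k hk
    have h := hth k hk
    have h1 : a ≤ gapLeft a G H k := le_csSup (hbddA k) (Set.mem_insert _ _)
    have h2 : gapRight b G H k ≤ b := csInf_le (hbddB k hk) (Set.mem_insert _ _)
    constructor
    · linarith [le_trans h (min_le_left _ _)]
    · linarith [le_trans h (min_le_right _ _)]
  · intro i j hi hj hij
    rcases lt_trichotomy i j with h | rfl | h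
    · rw [if_pos h]
      have h1 := le_trans (hth j hj) (min_le_left _ _)
      have h2 : H i ≤ gapLeft a G H j :=
        le_csSup (hbddA j) (Set.mem_insert_iff.2 (Or.inr ⟨i, h, rfl, hij⟩))
      linarith
    · exact absurd hij (not_le.2 hi)
    · rw [if_neg (by omega)]
      have h1 := le_trans (hth i hi) (min_le_right _ _)
      have h2 : gapRight b G H i ≤ G j :=
        csInf_le (hbddB i hi) (Set.mem_insert_iff.2 (Or.inr ⟨j, h, rfl, hij⟩))
      linarith

end PIProof


/-- If a Cantor-type set `E ⊆ [lo, hi] ⊂ (0, ∞)` is such that `log E` has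
thickness strictly greater than 1, then `E · E = [lo², hi²]`. -/
theorem product_is_interval (lo hi : ℝ) (g h : ℕ → ℝ)
    (hlo : 0 < lo) (hI : lo < hi)
    (hgap : ∀ k, g k ≤ h k)
    (hsub : ∀ k, Set.Ioo (g k) (h k) ⊆ Set.Icc lo hi)
    (hdisj : Pairwise (Function.onFun Disjoint fun k => Set.Ioo (g k) (h k)))
    (hthick : ∃ τ : ℝ, 1 < τ ∧
      ThickAtLeast (Real.log lo) (Real.log hi)
        (fun k => Real.log (g k)) (fun k => Real.log (h k)) τ) :
    gapCantorSet lo hi g h * gapCantorSet lo hi g h = Set.Icc (lo * lo) (hi * hi) := by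
  obtain ⟨τ, hτ, hth⟩ := hthick
  have hhi : 0 < hi := lt_trans hlo hI
  have hsub' : ∀ k, g k < h k → lo ≤ g k ∧ h k ≤ hi := by
    intro k hk
    constructor
    · by_contra hc
      push_neg at hc
      have hmn : g k < min lo (h k) := lt_min hc hk
      have hx : (g k + min lo (h k)) / 2 ∈ Set.Ioo (g k) (h k) := by
        constructor
        · linarith
        · have := min_le_right lo (h k); linarith
      have h1 := (hsub k hx).1
      have := min_le_left lo (h k)
      linarith
    · by_contra hc
      push_neg at hc
      have hmx : max hi (g k) < h k := max_lt hc hk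
      have hx : (max hi (g k) + h k) / 2 ∈ Set.Ioo (g k) (h k) := by
        constructor
        · have := le_max_right hi (g k); linarith
        · linarith
      have h1 := (hsub k hx).2
      have := le_max_left hi (g k)
      linarith
  have hlog_in : ∀ k, Real.log (g k) < Real.log (h k) → g k < h k := by
    intro k hk
    rcases lt_or_eq_of_le (hgap k) with h1 | h1
    · exact h1
    · rw [h1] at hk; exact absurd hk (lt_irrefl _)
  have hinA : ∀ k, Real.log (g k) < Real.log (h k) →
      Real.log lo ≤ Real.log (g k) ∧ Real.log (h k) ≤ Real.log hi := by
    intro k hk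
    have hk' := hlog_in k hk
    obtain ⟨h1, h2⟩ := hsub' k hk'
    exact ⟨Real.log_le_log hlo h1,
      Real.log_le_log (lt_of_lt_of_le hlo (le_trans h1 (hgap k))) h2⟩
  have hdisjL : ∀ i j, i ≠ j → ∀ x,
      x ∈ Set.Ioo (Real.log (g i)) (Real.log (h i)) →
      x ∉ Set.Ioo (Real.log (g j)) (Real.log (h j)) := by
    intro i j hij x hx1 hx2
    have key : ∀ k, x ∈ Set.Ioo (Real.log (g k)) (Real.log (h k)) →
        Real.exp x ∈ Set.Ioo (g k) (h k) := by
      intro k hk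
      have hklt : g k < h k := hlog_in k (lt_trans hk.1 hk.2)
      have hgpos : 0 < g k := lt_of_lt_of_le hlo (hsub' k hklt).1
      constructor
      · have := Real.exp_lt_exp.2 hk.1
        rwa [Real.exp_log hgpos] at this
      · have := Real.exp_lt_exp.2 hk.2
        rwa [Real.exp_log (lt_trans hgpos hklt)] at this
    exact Set.disjoint_left.1 (hdisj hij) (key i hx1) (key j hx2)
  have hflk := PIProof.thick_flanks hth hinA
  set S : PIProof.Sys τ :=
    { a := Real.log lo, b := Real.log hi,
      G := fun k => Real.log (g k), H := fun k => Real.log (h k),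
      inA := hinA, disj := hdisjL, edge := hflk.1, pair := hflk.2 } with hS
  have hab : Real.log lo ≤ Real.log hi := (Real.log_lt_log hlo hI).le
  apply Set.Subset.antisymm
  · rintro z hz
    rw [Set.mem_mul] at hz
    obtain ⟨x, hx, y, hy, rfl⟩ := hz
    have hx1 : x ∈ Set.Icc lo hi := hx.1
    have hy1 : y ∈ Set.Icc lo hi := hy.1
    rw [Set.mem_Icc] at hx1 hy1
    constructor
    · exact mul_le_mul hx1.1 hy1.1 hlo.le (le_trans hlo.le hx1.1)
    · exact mul_le_mul hx1.2 hy1.2 (le_trans hlo.le hy1.1) hhi.le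
  · intro z hz
    rw [Set.mem_Icc] at hz
    have hz0 : 0 < z := lt_of_lt_of_le (mul_pos hlo hlo) hz.1
    have ht1 : Real.log lo + Real.log lo ≤ Real.log z := by
      rw [← Real.log_mul hlo.ne' hlo.ne']
      exact Real.log_le_log (mul_pos hlo hlo) hz.1
    have ht2 : Real.log z ≤ Real.log hi + Real.log hi := by
      rw [← Real.log_mul hhi.ne' hhi.ne']
      exact Real.log_le_log hz0 hz.2
    obtain ⟨x, hx1, hx2, hx3, hx4⟩ := PIProof.sum_core hτ S hab ht1 ht2
    have hmem : ∀ w, w ∈ Set.Icc (Real.log lo) (Real.log hi) →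
        (∀ k, w ∉ Set.Ioo (Real.log (g k)) (Real.log (h k))) →
        Real.exp w ∈ gapCantorSet lo hi g h := by
      intro w hw hwg
      constructor
      · constructor
        · have := Real.exp_le_exp.2 hw.1
          rwa [Real.exp_log hlo] at this
        · have := Real.exp_le_exp.2 hw.2
          rwa [Real.exp_log hhi] at this
      · intro hc
        obtain ⟨k, hk⟩ := Set.mem_iUnion.1 hc
        have hklt : g k < h k := lt_trans hk.1 hk.2
        have hgpos : 0 < g k := lt_of_lt_of_le hlo (hsub' k hklt).1
        refine hwg k ⟨?_, ?_⟩
        · have := Real.log_lt_log hgpos hk.1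
          rwa [Real.log_exp] at this
        · have := Real.log_lt_log (Real.exp_pos w) hk.2
          rwa [Real.log_exp] at this
    rw [Set.mem_mul]
    refine ⟨Real.exp x, hmem x hx1 hx2, Real.exp (Real.log z - x), hmem _ hx3 hx4, ?_⟩
    rw [← Real.exp_add]
    have he : x + (Real.log z - x) = Real.log z := by ring
    rw [he]
    exact Real.exp_log hz0
end

section
/- Let F be the set of real numbers x = [4; 3, x₂, x₃, …] whose continued fraction partial quotients satisfy xᵢ ∈ {1,2,3,4} for all i ≥ 2, with no occurrence of the consecutive pattern (4,4) and no occurrence of the consecutive pattern (4,1,4,1,4). Then the infimum of F is [4; 3, overline(1,4,1,4,1,3)] = (783 + √26565)/222 and the supremum of F is [4; 3, overline(4,1,4,1,3,1)] = (5501 − √26565)/1238. -/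
open Filter

/-- Value of a finite continued fraction `[a₀; a₁, …, aₙ]`. -/
noncomputable def cfVal : List ℤ → ℝ
  | [] => 0
  | [a] => (a : ℝ)
  | a :: b :: l => (a : ℝ) + 1 / cfVal (b :: l)

/-- Value of the infinite continued fraction with partial quotients `x 0, x 1, …`. -/
noncomputable def cfInfVal (x : ℕ → ℤ) : ℝ :=
  limUnder atTop fun n => cfVal ((List.range (n + 1)).map x)

/-- The Cantor-type set `F₄*`: continued fractions `[4; 3, x₂, x₃, …]` with all
partial quotients in `{1,2,3,4}`, avoiding the patterns `(4,4)` and `(4,1,4,1,4)`. -/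
def F4star : Set ℝ :=
  {x : ℝ | ∃ d : ℕ → ℤ, d 0 = 4 ∧ d 1 = 3 ∧
    (∀ i, 2 ≤ i → d i ∈ ({1, 2, 3, 4} : Set ℤ)) ∧
    (∀ i, ¬(d i = 4 ∧ d (i + 1) = 4)) ∧
    (∀ i, ¬(d i = 4 ∧ d (i + 1) = 1 ∧ d (i + 2) = 4 ∧ d (i + 3) = 1 ∧ d (i + 4) = 4)) ∧
    x = cfInfVal d}


/-- `CF4.G d n x` is the value of `[d 0; d 1, …, d (n-1), x]`. -/
noncomputable def CF4.G (d : ℕ → ℤ) : ℕ → ℝ → ℝ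
  | 0, x => x
  | (n+1), x => (d 0 : ℝ) + 1 / CF4.G (fun i => d (i + 1)) n x

namespace CF4

def Good (d : ℕ → ℤ) : Prop := ∀ i, 1 ≤ d i ∧ d i ≤ 4

lemma good_shift {d : ℕ → ℤ} (h : Good d) (m : ℕ) : Good (fun i => d (i + m)) :=
  fun i => h (i + m)

lemma G_bound' : ∀ (n : ℕ) (d : ℕ → ℤ), Good d →
    ∀ x, 1 ≤ x → x ≤ 5 → (d 0 : ℝ) + 1/5 ≤ G d (n+1) x ∧ G d (n+1) x ≤ (d 0 : ℝ) + 1 := by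
  intro n
  induction' n with n ih
  · intro d hd x hx1 hx5
    show (d 0:ℝ) + 1/5 ≤ (d 0 : ℝ) + 1 / G (fun i => d (i+1)) 0 x ∧ _
    simp only [G]
    constructor
    · have : (1:ℝ)/5 ≤ 1/x := by
        apply one_div_le_one_div_of_le <;> linarith
      linarith
    · have : (1:ℝ)/x ≤ 1 := by
        rw [div_le_one (by linarith)]; linarith
      linarith
  · intro d hd x hx1 hx5
    have h1 := (good_shift hd 1) 0
    have ih' := ih _ (good_shift hd 1) x hx1 hx5
    have hl : (6:ℝ)/5 ≤ G (fun i => d (i+1)) (n+1) x := by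
      have : (1:ℝ) ≤ (d 1 : ℝ) := by exact_mod_cast h1.1
      simp only [show (fun i => d (i+1)) 0 = d 1 from rfl] at ih'
      linarith [ih'.1]
    have hr : G (fun i => d (i+1)) (n+1) x ≤ 5 := by
      have : (d 1 : ℝ) ≤ 4 := by exact_mod_cast h1.2
      simp only [show (fun i => d (i+1)) 0 = d 1 from rfl] at ih'
      linarith [ih'.2]
    have hG : G d (n+1+1) x = (d 0:ℝ) + 1 / G (fun i => d (i+1)) (n+1) x := rfl
    rw [hG]
    constructor
    · have : (1:ℝ)/5 ≤ 1 / G (fun i => d (i+1)) (n+1) x := by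
        apply one_div_le_one_div_of_le <;> linarith
      linarith
    · have : (1:ℝ) / G (fun i => d (i+1)) (n+1) x ≤ 1 := by
        rw [div_le_one (by linarith)]; linarith
      linarith

lemma G_bound {d : ℕ → ℤ} (hd : Good d) (n : ℕ) {x : ℝ} (hx1 : 1 ≤ x) (hx5 : x ≤ 5) :
    (d 0 : ℝ) + 1/5 ≤ G d (n+1) x ∧ G d (n+1) x ≤ (d 0 : ℝ) + 1 :=
  G_bound' n d hd x hx1 hx5

lemma G_mem {d : ℕ → ℤ} (hd : Good d) (n : ℕ) {x : ℝ} (hx1 : 1 ≤ x) (hx5 : x ≤ 5) :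
    1 ≤ G d n x ∧ G d n x ≤ 5 := by
  cases n with
  | zero => exact ⟨hx1, hx5⟩
  | succ n =>
    have h := G_bound hd n hx1 hx5
    have h0 := hd 0
    have h1 : (1:ℝ) ≤ (d 0 : ℝ) := by exact_mod_cast h0.1
    have h4 : (d 0 : ℝ) ≤ 4 := by exact_mod_cast h0.2
    constructor <;> linarith [h.1, h.2]

lemma G_lip' : ∀ (n : ℕ) (d : ℕ → ℤ), Good d → ∀ x y, 1 ≤ x → x ≤ 5 → 1 ≤ y → y ≤ 5 →
      |G d (n+1) x - G d (n+1) y| ≤ (25/36)^n * |x - y| := by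
  intro n
  induction' n with n ih
  · intro d hd x y hx1 hx5 hy1 hy5
    show |((d 0:ℝ) + 1/x) - ((d 0:ℝ) + 1/y)| ≤ _
    have hxy : (d 0:ℝ) + 1/x - ((d 0:ℝ) + 1/y) = (y - x) / (x*y) := by
      field_simp; ring
    rw [hxy, abs_div, pow_zero, one_mul]
    have h1 : (1:ℝ) ≤ x*y := by nlinarith
    rw [abs_of_pos (by nlinarith : (0:ℝ) < x*y), abs_sub_comm y x]
    exact div_le_self (abs_nonneg _) h1
  · intro d hd x y hx1 hx5 hy1 hy5
    set s := G (fun i => d (i+1)) (n+1) x with hs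
    set t := G (fun i => d (i+1)) (n+1) y with ht
    have hsb := G_bound (good_shift hd 1) n hx1 hx5
    have htb := G_bound (good_shift hd 1) n hy1 hy5
    have h1 := (good_shift hd 1) 0
    have h1r : (1:ℝ) ≤ ((fun i => d (i+1)) 0 : ℤ) := by exact_mod_cast h1.1
    have hsl : (6:ℝ)/5 ≤ s := by push_cast at h1r ⊢; linarith [hsb.1]
    have htl : (6:ℝ)/5 ≤ t := by push_cast at h1r ⊢; linarith [htb.1]
    have hst : s ≠ 0 := by linarith
    have htt : t ≠ 0 := by linarith
    show |((d 0:ℝ) + 1/s) - ((d 0:ℝ) + 1/t)| ≤ _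
    have hxy : (d 0:ℝ) + 1/s - ((d 0:ℝ) + 1/t) = (t - s) / (s*t) := by
      field_simp; ring
    rw [hxy, abs_div]
    have hstp : (36:ℝ)/25 ≤ s*t := by nlinarith
    have hih := ih _ (good_shift hd 1) x y hx1 hx5 hy1 hy5
    rw [abs_of_pos (by nlinarith : (0:ℝ) < s*t)]
    have : |t - s| / (s*t) ≤ (25/36) * |t - s| := by
      rw [div_le_iff₀ (by nlinarith)]
      nlinarith [abs_nonneg (t - s)]
    calc |t - s| / (s*t) ≤ (25/36) * |t - s| := this
      _ = (25/36) * |s - t| := by rw [abs_sub_comm]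
      _ ≤ (25/36) * ((25/36)^n * |x - y|) := by
          apply mul_le_mul_of_nonneg_left _ (by norm_num)
          exact hih
      _ = (25/36)^(n+1) * |x - y| := by ring

end CF4

namespace CF4
lemma G_lip {d : ℕ → ℤ} (hd : Good d) (n : ℕ) {x y : ℝ}
    (hx1 : 1 ≤ x) (hx5 : x ≤ 5) (hy1 : 1 ≤ y) (hy5 : y ≤ 5) :
    |G d (n+1) x - G d (n+1) y| ≤ (25/36)^n * |x - y| :=
  G_lip' n d hd x y hx1 hx5 hy1 hy5
end CF4

namespace CF4

lemma G_congr : ∀ (m : ℕ) (d e : ℕ → ℤ), (∀ i < m, d i = e i) → ∀ x, G d m x = G e m x := by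
  intro m
  induction' m with m ih
  · intro d e _ x; rfl
  · intro d e h x
    show (d 0 : ℝ) + 1 / G (fun i => d (i+1)) m x = (e 0 : ℝ) + 1 / G (fun i => e (i+1)) m x
    rw [h 0 (Nat.succ_pos m), ih _ _ (fun i hi => h (i+1) (by omega)) x]

lemma G_comp : ∀ (m : ℕ) (d : ℕ → ℤ) (n : ℕ) (x : ℝ),
    G d (m + n) x = G d m (G (fun i => d (i + m)) n x) := by
  intro m
  induction' m with m ih
  · intro d n x
    simp only [Nat.zero_add]
    show G d n x = G (fun i => d (i + 0)) n x
    exact G_congr n _ _ (fun i _ => by simp) x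
  · intro d n x
    have h1 : m + 1 + n = (m + n) + 1 := by omega
    rw [h1]
    show (d 0 : ℝ) + 1 / G (fun i => d (i+1)) (m + n) x = _
    rw [ih (fun i => d (i+1)) n x]
    have hfe : G (fun i => d (i + m + 1)) n x = G (fun i => d (i + (m+1))) n x :=
      G_congr n _ _ (fun i _ => by congr 1 <;> omega) x
    show (d 0 : ℝ) + 1 / G (fun i => d (i+1)) m (G (fun i => d (i + m + 1)) n x)
      = (d 0 : ℝ) + 1 / G (fun i => d (i+1)) m (G (fun i => d (i + (m+1))) n x)
    rw [hfe]

lemma G_mono : ∀ (k : ℕ) (d : ℕ → ℤ), Good d → ∀ x y, 1 ≤ x → x ≤ 5 → 1 ≤ y → y ≤ 5 →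
    x ≤ y → (Even k → G d k x ≤ G d k y) ∧ (¬ Even k → G d k y ≤ G d k x) := by
  intro k
  induction' k with k ih
  · intro d _ x y _ _ _ _ hxy
    exact ⟨fun _ => hxy, fun h => absurd Even.zero h⟩
  · intro d hd x y hx1 hx5 hy1 hy5 hxy
    have hs := G_mem (good_shift hd 1) k hx1 hx5
    have ht := G_mem (good_shift hd 1) k hy1 hy5
    have ihh := ih _ (good_shift hd 1) x y hx1 hx5 hy1 hy5 hxy
    have hGx : G d (k+1) x = (d 0 : ℝ) + 1 / G (fun i => d (i+1)) k x := rfl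
    have hGy : G d (k+1) y = (d 0 : ℝ) + 1 / G (fun i => d (i+1)) k y := rfl
    rw [hGx, hGy]
    constructor
    · intro hek
      have hk : ¬ Even k := by simpa [Nat.even_add_one] using hek
      have := ihh.2 hk
      have : 1 / G (fun i => d (i+1)) k x ≤ 1 / G (fun i => d (i+1)) k y :=
        one_div_le_one_div_of_le (by linarith [ht.1]) this
      linarith
    · intro hok
      have hk : Even k := by
        rcases Nat.even_or_odd k with h | h
        · exact h
        · exact absurd (h.add_one) hok
      have := ihh.1 hk
      have : 1 / G (fun i => d (i+1)) k y ≤ 1 / G (fun i => d (i+1)) k x :=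
        one_div_le_one_div_of_le (by linarith [hs.1]) this
      linarith

/-- the `n`-th approximant -/
noncomputable def A (d : ℕ → ℤ) (n : ℕ) : ℝ := G d n ((d n : ℝ))

lemma cfVal_eq_A : ∀ (n : ℕ) (d : ℕ → ℤ), cfVal ((List.range (n + 1)).map d) = A d n := by
  intro n
  induction' n with n ih
  · intro d; simp [cfVal, A, G]
  · intro d
    have hr : List.range (n + 2) = 0 :: (List.range (n+1)).map Nat.succ :=
      List.range_succ_eq_map (n := n+1)
    rw [hr]
    have hmap : ((0 : ℕ) :: (List.range (n+1)).map Nat.succ).map d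
        = d 0 :: (List.range (n+1)).map (fun i => d (i+1)) := by
      simp only [List.map_cons, List.map_map]; rfl
    rw [hmap]
    have hne : ∃ b l, (List.range (n+1)).map (fun i => d (i+1)) = b :: l := by
      rcases n with _ | n
      · exact ⟨d 1, [], rfl⟩
      · refine ⟨d 1, ((List.range (n+1)).map Nat.succ).map (fun i => d (i+1)), ?_⟩
        rw [List.range_succ_eq_map (n := n+1)]; simp
    obtain ⟨b, l, hbl⟩ := hne
    rw [hbl]
    show (d 0 : ℝ) + 1 / cfVal (b :: l) = A d (n+1)
    rw [← hbl, ih (fun i => d (i+1))]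
    rfl

lemma digit_mem {d : ℕ → ℤ} (hd : Good d) (n : ℕ) :
    1 ≤ ((d n : ℝ)) ∧ ((d n : ℝ)) ≤ 5 := by
  have := hd n
  constructor
  · exact_mod_cast this.1
  · have : (d n : ℝ) ≤ 4 := by exact_mod_cast this.2
    linarith

lemma A_succ {d : ℕ → ℤ} (n : ℕ) :
    A d (n+1) = G d n ((d n : ℝ) + 1 / (d (n+1) : ℝ)) := by
  have h := G_comp n d 1 ((d (n+1) : ℝ))
  have h2 : G (fun i => d (i + n)) 1 ((d (n+1) : ℝ)) = (d n : ℝ) + 1 / (d (n+1) : ℝ) := by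
    show ((fun i => d (i + n)) 0 : ℝ) + 1 / G (fun i => d (i + 1 + n)) 0 ((d (n+1) : ℝ)) = _
    have : G (fun i => d (i + 1 + n)) 0 ((d (n+1) : ℝ)) = ((d (n+1) : ℝ)) := rfl
    rw [this]
    norm_num
  rw [A, h, h2]

lemma A_mem {d : ℕ → ℤ} (hd : Good d) (n : ℕ) : 1 ≤ A d n ∧ A d n ≤ 5 :=
  G_mem hd n (digit_mem hd n).1 (digit_mem hd n).2

lemma y_mem {d : ℕ → ℤ} (hd : Good d) (n : ℕ) :
    1 ≤ (d n : ℝ) + 1 / (d (n+1) : ℝ) ∧ (d n : ℝ) + 1 / (d (n+1) : ℝ) ≤ 5 := by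
  obtain ⟨h1, h5⟩ := digit_mem hd n
  obtain ⟨g1, g5⟩ := digit_mem hd (n+1)
  have : (0:ℝ) < 1 / (d (n+1) : ℝ) := by positivity
  have : 1 / (d (n+1) : ℝ) ≤ 1 := by rw [div_le_one (by linarith)]; linarith
  have h4 : (d n : ℝ) ≤ 4 := by exact_mod_cast (hd n).2
  constructor <;> linarith

lemma dist_A {d : ℕ → ℤ} (hd : Good d) (n : ℕ) :
    dist (A d n) (A d (n+1)) ≤ (36/25) * (25/36)^n := by
  rw [Real.dist_eq, A_succ]
  obtain ⟨hy1, hy5⟩ := y_mem hd n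
  obtain ⟨hx1, hx5⟩ := digit_mem hd n
  cases n with
  | zero =>
    show |(d 0 : ℝ) - ((d 0 : ℝ) + 1 / (d 1 : ℝ))| ≤ _
    obtain ⟨g1, g5⟩ := digit_mem hd 1
    rw [show (d 0 : ℝ) - ((d 0 : ℝ) + 1 / (d 1 : ℝ)) = -(1 / (d 1 : ℝ)) by ring, abs_neg,
      abs_of_pos (by positivity)]
    rw [div_le_iff₀ (by linarith)]
    norm_num; nlinarith
  | succ m =>
    calc |G d (m+1) ((d (m+1) : ℝ)) - G d (m+1) ((d (m+1) : ℝ) + 1 / (d (m+2) : ℝ))|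
        ≤ (25/36)^m * |(d (m+1) : ℝ) - ((d (m+1) : ℝ) + 1 / (d (m+2) : ℝ))| :=
          G_lip hd m hx1 hx5 hy1 hy5
      _ ≤ (25/36)^m * 1 := by
          apply mul_le_mul_of_nonneg_left _ (by positivity)
          obtain ⟨g1, g5⟩ := digit_mem hd (m+2)
          rw [show (d (m+1) : ℝ) - ((d (m+1) : ℝ) + 1 / (d (m+2) : ℝ))
              = -(1 / (d (m+2) : ℝ)) by ring, abs_neg, abs_of_pos (by positivity)]
          rw [div_le_one (by linarith)]; linarith
      _ ≤ (36/25) * (25/36)^(m+1) := by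
          rw [pow_succ]; ring_nf; nlinarith [pow_pos (by norm_num : (0:ℝ) < 25/36) m]

lemma tendsto_A {d : ℕ → ℤ} (hd : Good d) :
    Tendsto (A d) atTop (nhds (cfInfVal d)) := by
  have hc : CauchySeq (A d) :=
    cauchySeq_of_le_geometric (25/36) (36/25) (by norm_num) (dist_A hd)
  obtain ⟨L, hL⟩ := cauchySeq_tendsto_of_complete hc
  have he : (fun n => cfVal ((List.range (n + 1)).map d)) = A d := by
    funext n; exact cfVal_eq_A n d
  have : cfInfVal d = L := by
    rw [cfInfVal, he]; exact hL.limUnder_eq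
  rwa [this]

lemma cfInfVal_mem {d : ℕ → ℤ} (hd : Good d) :
    1 ≤ cfInfVal d ∧ cfInfVal d ≤ 5 := by
  constructor
  · exact ge_of_tendsto (tendsto_A hd) (Eventually.of_forall fun n => (A_mem hd n).1)
  · exact le_of_tendsto (tendsto_A hd) (Eventually.of_forall fun n => (A_mem hd n).2)

/-- Comparison: if `d` and `e` agree below `k` and `d k < e k`. -/
lemma comp_le {d e : ℕ → ℤ} (hd : Good d) (he : Good e) (k : ℕ)
    (hpre : ∀ i < k, d i = e i) (hk : d k + 1 ≤ e k) :
    (Even k → cfInfVal d ≤ cfInfVal e) ∧ (¬ Even k → cfInfVal e ≤ cfInfVal d) := by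
  have hek1 : (1:ℝ) ≤ (e k : ℝ) := (digit_mem he k).1
  have hek5 : (e k : ℝ) ≤ 5 := (digit_mem he k).2
  set c : ℝ := G d k ((e k : ℝ)) with hc
  have hcongr : G e k ((e k : ℝ)) = c := (G_congr k e d (fun i hi => (hpre i hi).symm) _)
  -- d-side approximants are eventually on the d-side of c
  have hdA : ∀ n, k + 1 ≤ n →
      (Even k → A d n ≤ c) ∧ (¬ Even k → c ≤ A d n) := by
    intro n hn
    obtain ⟨m, rfl⟩ : ∃ m, n = k + (m + 1) := ⟨n - k - 1, by omega⟩
    have hs := G_bound (good_shift hd k) m (digit_mem hd (k+(m+1))).1 (digit_mem hd (k+(m+1))).2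
    have hsm := G_mem (good_shift hd k) (m+1) (digit_mem hd (k+(m+1))).1 (digit_mem hd (k+(m+1))).2
    set s : ℝ := G (fun i => d (i + k)) (m+1) ((d (k+(m+1)) : ℝ)) with hss
    have hA : A d (k+(m+1)) = G d k s := by rw [A, G_comp k d (m+1)]
    have hdk : ((fun i => d (i + k)) 0 : ℝ) = (d k : ℝ) := by norm_num
    rw [hdk] at hs
    have hdk1 : (d k : ℝ) + 1 ≤ (e k : ℝ) := by exact_mod_cast hk
    have hsle : s ≤ (e k : ℝ) := by linarith [hs.2]
    have := G_mono k d hd s ((e k : ℝ)) hsm.1 hsm.2 hek1 hek5 hsle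
    rw [hA]
    exact this
  have heA : ∀ n, k + 1 ≤ n →
      (Even k → c ≤ A e n) ∧ (¬ Even k → A e n ≤ c) := by
    intro n hn
    obtain ⟨m, rfl⟩ : ∃ m, n = k + (m + 1) := ⟨n - k - 1, by omega⟩
    have hs := G_bound (good_shift he k) m (digit_mem he (k+(m+1))).1 (digit_mem he (k+(m+1))).2
    have hsm := G_mem (good_shift he k) (m+1) (digit_mem he (k+(m+1))).1 (digit_mem he (k+(m+1))).2
    set t : ℝ := G (fun i => e (i + k)) (m+1) ((e (k+(m+1)) : ℝ)) with hts
    have hA : A e (k+(m+1)) = G e k t := by rw [A, G_comp k e (m+1)]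
    have hek : ((fun i => e (i + k)) 0 : ℝ) = (e k : ℝ) := by norm_num
    rw [hek] at hs
    have htle : (e k : ℝ) ≤ t := by linarith [hs.1]
    have := G_mono k e he ((e k : ℝ)) t hek1 hek5 hsm.1 hsm.2 htle
    rw [hA, ← hcongr] at *
    exact ⟨fun h => this.1 h, fun h => this.2 h⟩
  constructor
  · intro hev
    have h1 : cfInfVal d ≤ c :=
      le_of_tendsto (tendsto_A hd) (eventually_atTop.2 ⟨k+1, fun n hn => (hdA n hn).1 hev⟩)
    have h2 : c ≤ cfInfVal e :=
      ge_of_tendsto (tendsto_A he) (eventually_atTop.2 ⟨k+1, fun n hn => (heA n hn).1 hev⟩)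
    linarith
  · intro hod
    have h1 : c ≤ cfInfVal d :=
      ge_of_tendsto (tendsto_A hd) (eventually_atTop.2 ⟨k+1, fun n hn => (hdA n hn).2 hod⟩)
    have h2 : cfInfVal e ≤ c :=
      le_of_tendsto (tendsto_A he) (eventually_atTop.2 ⟨k+1, fun n hn => (heA n hn).2 hod⟩)
    linarith

/-! ### the extremal periodic sequences -/

def pmin (j : ℕ) : ℤ := if j % 6 = 1 ∨ j % 6 = 3 then 4 else if j % 6 = 5 then 3 else 1
def gmin (i : ℕ) : ℤ := if i = 0 then 4 else if i = 1 then 3 else pmin (i - 2)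
def pmax (j : ℕ) : ℤ := if j % 6 = 0 ∨ j % 6 = 2 then 4 else if j % 6 = 4 then 3 else 1
def gmax (i : ℕ) : ℤ := if i = 0 then 4 else if i = 1 then 3 else pmax (i - 2)

lemma good_pmin : Good pmin := by intro i; unfold pmin; split_ifs <;> omega
lemma good_gmin : Good gmin := by
  intro i; unfold gmin pmin; split_ifs <;> omega
lemma good_pmax : Good pmax := by intro i; unfold pmax; split_ifs <;> omega
lemma good_gmax : Good gmax := by
  intro i; unfold gmax pmax; split_ifs <;> omega

lemma pmin_even {j : ℕ} (h : j % 2 = 0) : pmin j = 1 := by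
  unfold pmin; split_ifs <;> omega
lemma pmin_val {j : ℕ} : (j % 6 = 1 ∨ j % 6 = 3 → pmin j = 4) ∧ (j % 6 = 5 → pmin j = 3) := by
  unfold pmin; split_ifs <;> omega
lemma pmin_eq4 {j : ℕ} (h : pmin j = 4) : j % 6 = 1 ∨ j % 6 = 3 := by
  by_contra hc; unfold pmin at h; split_ifs at h <;> omega
lemma pmax_odd {j : ℕ} (h : j % 2 = 1) : pmax j = 1 := by
  unfold pmax; split_ifs <;> omega
lemma pmax_val {j : ℕ} : (j % 6 = 0 ∨ j % 6 = 2 → pmax j = 4) ∧ (j % 6 = 4 → pmax j = 3) := by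
  unfold pmax; split_ifs <;> omega
lemma pmax_eq4 {j : ℕ} (h : pmax j = 4) : j % 6 = 0 ∨ j % 6 = 2 := by
  by_contra hc; unfold pmax at h; split_ifs at h <;> omega

lemma gmin_ge2 {i : ℕ} (h : 2 ≤ i) : gmin i = pmin (i - 2) := by
  unfold gmin; split_ifs <;> first | omega | rfl
lemma gmax_ge2 {i : ℕ} (h : 2 ≤ i) : gmax i = pmax (i - 2) := by
  unfold gmax; split_ifs <;> first | omega | rfl

lemma gmin_pat2 (i : ℕ) : ¬(gmin i = 4 ∧ gmin (i + 1) = 4) := by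
  rintro ⟨h4, h4'⟩
  rcases Nat.lt_or_ge i 2 with hi | hi
  · interval_cases i <;> simp [gmin, pmin] at h4 h4'
  · rw [gmin_ge2 hi] at h4
    rw [gmin_ge2 (by omega)] at h4'
    have h1 := pmin_eq4 h4
    have h2 : (i + 1 - 2) % 2 = 0 := by omega
    rw [pmin_even h2] at h4'
    omega

lemma gmin_pat5 (i : ℕ) :
    ¬(gmin i = 4 ∧ gmin (i+1) = 1 ∧ gmin (i+2) = 4 ∧ gmin (i+3) = 1 ∧ gmin (i+4) = 4) := by
  rintro ⟨h0, h1, h2, h3, h4⟩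
  rcases Nat.lt_or_ge i 2 with hi | hi
  · interval_cases i <;> simp [gmin, pmin] at h0 h1 h2 h3 h4
  · rw [gmin_ge2 hi] at h0
    rw [gmin_ge2 (by omega)] at h2 h4
    rcases pmin_eq4 h0 with hc | hc
    · have : (i + 4 - 2) % 6 = 5 := by omega
      rw [pmin_val.2 this] at h4; omega
    · have : (i + 2 - 2) % 6 = 5 := by omega
      rw [pmin_val.2 this] at h2; omega

lemma gmax_pat2 (i : ℕ) : ¬(gmax i = 4 ∧ gmax (i + 1) = 4) := by
  rintro ⟨h4, h4'⟩
  rcases Nat.lt_or_ge i 2 with hi | hi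
  · interval_cases i <;> simp [gmax, pmax] at h4 h4'
  · rw [gmax_ge2 hi] at h4
    rw [gmax_ge2 (by omega)] at h4'
    have h1 := pmax_eq4 h4
    have h2 : (i + 1 - 2) % 2 = 1 := by omega
    rw [pmax_odd h2] at h4'
    omega

lemma gmax_pat5 (i : ℕ) :
    ¬(gmax i = 4 ∧ gmax (i+1) = 1 ∧ gmax (i+2) = 4 ∧ gmax (i+3) = 1 ∧ gmax (i+4) = 4) := by
  rintro ⟨h0, h1, h2, h3, h4⟩
  rcases Nat.lt_or_ge i 2 with hi | hi
  · interval_cases i <;> simp [gmax, pmax] at h0 h1 h2 h3 h4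
  · rw [gmax_ge2 hi] at h0
    rw [gmax_ge2 (by omega)] at h2 h4
    rcases pmax_eq4 h0 with hc | hc
    · have : (i + 4 - 2) % 6 = 4 := by omega
      rw [pmax_val.2 this] at h4; omega
    · have : (i + 2 - 2) % 6 = 4 := by omega
      rw [pmax_val.2 this] at h2; omega

lemma G6_unfold (d : ℕ → ℤ) (x : ℝ) :
    G d 6 x = (d 0 : ℝ) + 1/((d 1:ℝ) + 1/((d 2:ℝ) + 1/((d 3:ℝ) + 1/((d 4:ℝ)
      + 1/((d 5:ℝ) + 1/x))))) := rfl

lemma G2_unfold (d : ℕ → ℤ) (x : ℝ) :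
    G d 2 x = (d 0 : ℝ) + 1/((d 1:ℝ) + 1/x) := rfl

lemma Gpmin6 {x : ℝ} (hx : 1 ≤ x) :
    G pmin 6 x = (134*x + 35)/(111*x + 29) := by
  rw [G6_unfold]
  have e0 : ((pmin 0 : ℤ) : ℝ) = 1 := by norm_num [pmin]
  have e1 : ((pmin 1 : ℤ) : ℝ) = 4 := by norm_num [pmin]
  have e2 : ((pmin 2 : ℤ) : ℝ) = 1 := by norm_num [pmin]
  have e3 : ((pmin 3 : ℤ) : ℝ) = 4 := by norm_num [pmin]
  have e4 : ((pmin 4 : ℤ) : ℝ) = 1 := by norm_num [pmin]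
  have e5 : ((pmin 5 : ℤ) : ℝ) = 3 := by norm_num [pmin]
  rw [e0, e1, e2, e3, e4, e5]
  have hx0 : (0:ℝ) < x := by linarith
  have h1 : (0:ℝ) < 3 + 1/x := by positivity
  have h2 : (0:ℝ) < 1 + 1/(3 + 1/x) := by positivity
  have h3 : (0:ℝ) < 4 + 1/(1 + 1/(3 + 1/x)) := by positivity
  have h4 : (0:ℝ) < 1 + 1/(4 + 1/(1 + 1/(3 + 1/x))) := by positivity
  have h5 : (0:ℝ) < 4 + 1/(1 + 1/(4 + 1/(1 + 1/(3 + 1/x)))) := by positivity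
  have h6 : (0:ℝ) < 111*x + 29 := by linarith
  field_simp
  ring
lemma Gpmax6 {x : ℝ} (hx : 1 ≤ x) :
    G pmax 6 x = (140*x + 111)/(29*x + 23) := by
  rw [G6_unfold]
  have e0 : ((pmax 0 : ℤ) : ℝ) = 4 := by norm_num [pmax]
  have e1 : ((pmax 1 : ℤ) : ℝ) = 1 := by norm_num [pmax]
  have e2 : ((pmax 2 : ℤ) : ℝ) = 4 := by norm_num [pmax]
  have e3 : ((pmax 3 : ℤ) : ℝ) = 1 := by norm_num [pmax]
  have e4 : ((pmax 4 : ℤ) : ℝ) = 3 := by norm_num [pmax]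
  have e5 : ((pmax 5 : ℤ) : ℝ) = 1 := by norm_num [pmax]
  rw [e0, e1, e2, e3, e4, e5]
  have hx0 : (0:ℝ) < x := by linarith
  have h1 : (0:ℝ) < 1 + 1/x := by positivity
  have h2 : (0:ℝ) < 3 + 1/(1 + 1/x) := by positivity
  have h3 : (0:ℝ) < 1 + 1/(3 + 1/(1 + 1/x)) := by positivity
  have h4 : (0:ℝ) < 4 + 1/(1 + 1/(3 + 1/(1 + 1/x))) := by positivity
  have h5 : (0:ℝ) < 1 + 1/(4 + 1/(1 + 1/(3 + 1/(1 + 1/x)))) := by positivity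
  have h6 : (0:ℝ) < 29*x + 23 := by linarith
  field_simp
  ring

/-- if the approximants of `d` are eventually the image of those of `p` under `G d (k+1)`,
then the value of `d` is `G d (k+1)` of the value of `p`. -/
lemma val_eq_G {d p : ℕ → ℤ} (hd : Good d) (hp : Good p) (k : ℕ)
    (h : ∀ n, A d (n + (k+1)) = G d (k+1) (A p n)) :
    cfInfVal d = G d (k+1) (cfInfVal p) := by
  have hTd : Tendsto (fun n => A d (n + (k+1))) atTop (nhds (cfInfVal d)) :=
    (tendsto_A hd).comp (tendsto_add_atTop_nat (k+1))
  refine tendsto_nhds_unique hTd ?_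
  have hL := cfInfVal_mem hp
  rw [show (fun n => A d (n + (k+1))) = (fun n => G d (k+1) (A p n)) from funext h]
  rw [tendsto_iff_dist_tendsto_zero]
  apply squeeze_zero (fun n => dist_nonneg)
    (g := fun n => (25/36)^k * dist (A p n) (cfInfVal p))
  · intro n
    rw [Real.dist_eq, Real.dist_eq]
    exact G_lip hd k (A_mem hp n).1 (A_mem hp n).2 hL.1 hL.2
  · have : Tendsto (fun n => dist (A p n) (cfInfVal p)) atTop (nhds 0) :=
      tendsto_iff_dist_tendsto_zero.1 (tendsto_A hp)
    simpa using this.const_mul (((25:ℝ)/36)^k)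

lemma shift_pmin : (fun i => pmin (i + 6)) = pmin := by
  funext i; unfold pmin; congr 1 <;> [skip; congr 1] <;> simp [Nat.add_mod]

lemma shift_gmin : (fun i => gmin (i + 2)) = pmin := by
  funext i
  rw [gmin_ge2 (by omega)]
  congr 1

lemma shift_pmax : (fun i => pmax (i + 6)) = pmax := by
  funext i; unfold pmax; congr 1 <;> [skip; congr 1] <;> simp [Nat.add_mod]

lemma shift_gmax : (fun i => gmax (i + 2)) = pmax := by
  funext i
  rw [gmax_ge2 (by omega)]
  congr 1

lemma pmin_fix : cfInfVal pmin = G pmin 6 (cfInfVal pmin) := by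
  refine val_eq_G good_pmin good_pmin 5 (fun n => ?_)
  show G pmin (n + 6) ((pmin (n+6) : ℝ)) = _
  rw [show n + 6 = 6 + n by omega, G_comp 6 pmin n, shift_pmin,
    show pmin (6 + n) = pmin (n + 6) by rw [Nat.add_comm],
    show pmin (n + 6) = pmin n from congrFun shift_pmin n]
  rfl

lemma pmax_fix : cfInfVal pmax = G pmax 6 (cfInfVal pmax) := by
  refine val_eq_G good_pmax good_pmax 5 (fun n => ?_)
  show G pmax (n + 6) ((pmax (n+6) : ℝ)) = _
  rw [show n + 6 = 6 + n by omega, G_comp 6 pmax n, shift_pmax,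
    show pmax (6 + n) = pmax (n + 6) by rw [Nat.add_comm],
    show pmax (n + 6) = pmax n from congrFun shift_pmax n]
  rfl

lemma gmin_val_eq : cfInfVal gmin = G gmin 2 (cfInfVal pmin) := by
  refine val_eq_G good_gmin good_pmin 1 (fun n => ?_)
  show G gmin (n + 2) ((gmin (n+2) : ℝ)) = _
  rw [show n + 2 = 2 + n by omega, G_comp 2 gmin n, shift_gmin,
    show gmin (2 + n) = gmin (n + 2) by rw [Nat.add_comm],
    show gmin (n + 2) = pmin n from congrFun shift_gmin n]
  rfl

lemma gmax_val_eq : cfInfVal gmax = G gmax 2 (cfInfVal pmax) := by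
  refine val_eq_G good_gmax good_pmax 1 (fun n => ?_)
  show G gmax (n + 2) ((gmax (n+2) : ℝ)) = _
  rw [show n + 2 = 2 + n by omega, G_comp 2 gmax n, shift_gmax,
    show gmax (2 + n) = gmax (n + 2) by rw [Nat.add_comm],
    show gmax (n + 2) = pmax n from congrFun shift_gmax n]
  rfl


noncomputable def sq : ℝ := Real.sqrt 26565

lemma sq_sq : sq^2 = 26565 := Real.sq_sqrt (by norm_num)
lemma sq_nn : 0 ≤ sq := Real.sqrt_nonneg _
lemma sq_lb : 162 < sq := by
  nlinarith [sq_nn, sq_sq]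
lemma sq_ub : sq < 163 := by
  nlinarith [Real.sqrt_nonneg (26565:ℝ), sq_sq, sq_nonneg (sq - 163), sq_nonneg (sq + 163)]

noncomputable def Tmin : ℝ := (105 + sq)/222
noncomputable def Tmax : ℝ := (117 + sq)/58

lemma Tmin_mem : 1 ≤ Tmin ∧ Tmin ≤ 5 := by
  unfold Tmin; constructor <;> nlinarith [sq_lb, sq_ub]
lemma Tmax_mem : 1 ≤ Tmax ∧ Tmax ≤ 5 := by
  unfold Tmax; constructor <;> nlinarith [sq_lb, sq_ub]

lemma Tmin_fix : G pmin 6 Tmin = Tmin := by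
  rw [Gpmin6 Tmin_mem.1]
  rw [div_eq_iff (by nlinarith [Tmin_mem.1] : (111*Tmin + 29) ≠ 0)]
  unfold Tmin
  linear_combination (-(1:ℝ)/444) * sq_sq

lemma Tmax_fix : G pmax 6 Tmax = Tmax := by
  rw [Gpmax6 Tmax_mem.1]
  rw [div_eq_iff (by nlinarith [Tmax_mem.1] : (29*Tmax + 23) ≠ 0)]
  unfold Tmax
  linear_combination (-(1:ℝ)/116) * sq_sq

lemma cfInfVal_pmin : cfInfVal pmin = Tmin := by
  have hm := cfInfVal_mem good_pmin
  have h1 : |cfInfVal pmin - Tmin| ≤ (25/36)^5 * |cfInfVal pmin - Tmin| := by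
    calc |cfInfVal pmin - Tmin| = |G pmin 6 (cfInfVal pmin) - G pmin 6 Tmin| := by
          rw [← pmin_fix, Tmin_fix]
      _ ≤ (25/36)^5 * |cfInfVal pmin - Tmin| :=
          G_lip good_pmin 5 hm.1 hm.2 Tmin_mem.1 Tmin_mem.2
  have h0 : |cfInfVal pmin - Tmin| ≤ 0 := by nlinarith [abs_nonneg (cfInfVal pmin - Tmin)]
  have h2 := abs_eq_zero.1 (le_antisymm h0 (abs_nonneg _))
  linarith [sub_eq_zero.1 h2]

lemma cfInfVal_pmax : cfInfVal pmax = Tmax := by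
  have hm := cfInfVal_mem good_pmax
  have h1 : |cfInfVal pmax - Tmax| ≤ (25/36)^5 * |cfInfVal pmax - Tmax| := by
    calc |cfInfVal pmax - Tmax| = |G pmax 6 (cfInfVal pmax) - G pmax 6 Tmax| := by
          rw [← pmax_fix, Tmax_fix]
      _ ≤ (25/36)^5 * |cfInfVal pmax - Tmax| :=
          G_lip good_pmax 5 hm.1 hm.2 Tmax_mem.1 Tmax_mem.2
  have h0 : |cfInfVal pmax - Tmax| ≤ 0 := by nlinarith [abs_nonneg (cfInfVal pmax - Tmax)]
  have h2 := abs_eq_zero.1 (le_antisymm h0 (abs_nonneg _))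
  linarith [sub_eq_zero.1 h2]

lemma cfInfVal_gmin : cfInfVal gmin = (783 + sq) / 222 := by
  rw [gmin_val_eq, cfInfVal_pmin, G2_unfold]
  have e0 : ((gmin 0 : ℤ) : ℝ) = 4 := by norm_num [gmin]
  have e1 : ((gmin 1 : ℤ) : ℝ) = 3 := by norm_num [gmin]
  rw [e0, e1]
  have h1 : (0:ℝ) < Tmin := by linarith [Tmin_mem.1]
  have h2 : (0:ℝ) < 3 + 1/Tmin := by positivity
  rw [show (4:ℝ) + 1/(3 + 1/Tmin) = (13*Tmin + 4)/(3*Tmin + 1) by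
    field_simp; ring]
  rw [div_eq_div_iff (by nlinarith) (by norm_num)]
  unfold Tmin
  linear_combination (-(1:ℝ)/74) * sq_sq

lemma cfInfVal_gmax : cfInfVal gmax = (5501 - sq) / 1238 := by
  rw [gmax_val_eq, cfInfVal_pmax, G2_unfold]
  have e0 : ((gmax 0 : ℤ) : ℝ) = 4 := by norm_num [gmax]
  have e1 : ((gmax 1 : ℤ) : ℝ) = 3 := by norm_num [gmax]
  rw [e0, e1]
  have h1 : (0:ℝ) < Tmax := by linarith [Tmax_mem.1]
  have h2 : (0:ℝ) < 3 + 1/Tmax := by positivity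
  rw [show (4:ℝ) + 1/(3 + 1/Tmax) = (13*Tmax + 4)/(3*Tmax + 1) by
    field_simp; ring]
  rw [div_eq_div_iff (by nlinarith) (by norm_num)]
  unfold Tmax
  linear_combination ((3:ℝ)/58) * sq_sq


lemma good_of_mem {d : ℕ → ℤ} (h0 : d 0 = 4) (h1 : d 1 = 3)
    (hset : ∀ i, 2 ≤ i → d i ∈ ({1, 2, 3, 4} : Set ℤ)) : Good d := by
  intro i
  rcases Nat.lt_or_ge i 2 with hi | hi
  · interval_cases i <;> omega
  · have := hset i hi
    simp only [Set.mem_insert_iff, Set.mem_singleton_iff] at this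
    omega

lemma lower_bound {d : ℕ → ℤ} (h0 : d 0 = 4) (h1 : d 1 = 3)
    (hset : ∀ i, 2 ≤ i → d i ∈ ({1, 2, 3, 4} : Set ℤ))
    (hp5 : ∀ i, ¬(d i = 4 ∧ d (i+1) = 1 ∧ d (i+2) = 4 ∧ d (i+3) = 1 ∧ d (i+4) = 4)) :
    cfInfVal gmin ≤ cfInfVal d := by
  have hd : Good d := good_of_mem h0 h1 hset
  by_cases hall : ∀ i, d i = gmin i
  · rw [funext hall]
  · push_neg at hall
    obtain ⟨k, hk, hpre⟩ : ∃ k, d k ≠ gmin k ∧ ∀ i < k, d i = gmin i :=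
      ⟨Nat.find hall, Nat.find_spec hall, fun i hi => not_not.1 (Nat.find_min hall hi)⟩
    have hg0 : gmin 0 = 4 := by norm_num [gmin]
    have hg1 : gmin 1 = 3 := by norm_num [gmin]
    have hk2 : 2 ≤ k := by
      by_contra hc
      interval_cases k
      · exact hk (by rw [h0, hg0])
      · exact hk (by rw [h1, hg1])
    have hdig : 1 ≤ d k ∧ d k ≤ 4 := hd k
    rcases Nat.even_or_odd k with he | ho
    · -- even: gmin k = 1, d k ≥ 2
      have he2 : k % 2 = 0 := Nat.even_iff.1 he
      have hgk : gmin k = 1 := by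
        rw [gmin_ge2 hk2, pmin_even (by omega : (k-2) % 2 = 0)]
      exact (comp_le good_gmin hd k (fun i hi => (hpre i hi).symm) (by omega)).1 he
    · have hodd : k % 2 = 1 := Nat.odd_iff.1 ho
      have hno : ¬ Even k := by rw [Nat.even_iff]; omega
      have hj : (k-2) % 6 = 1 ∨ (k-2) % 6 = 3 ∨ (k-2) % 6 = 5 := by omega
      rcases hj with hj | hj | hj
      · have hgk : gmin k = 4 := by rw [gmin_ge2 hk2, pmin_val.1 (Or.inl hj)]
        exact (comp_le hd good_gmin k hpre (by omega)).2 hno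
      · have hgk : gmin k = 4 := by rw [gmin_ge2 hk2, pmin_val.1 (Or.inr hj)]
        exact (comp_le hd good_gmin k hpre (by omega)).2 hno
      · have hgk : gmin k = 3 := by rw [gmin_ge2 hk2, pmin_val.2 hj]
        obtain ⟨m, rfl⟩ : ∃ m, k = m + 4 := ⟨k - 4, by omega⟩
        have hne4 : d (m + 4) ≠ 4 := by
          intro h4
          refine hp5 m ⟨?_, ?_, ?_, ?_, h4⟩
          · rw [hpre m (by omega), gmin_ge2 (by omega), pmin_val.1 (Or.inl (by omega))]
          · rw [hpre (m+1) (by omega), gmin_ge2 (by omega), pmin_even (by omega)]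
          · rw [hpre (m+2) (by omega), gmin_ge2 (by omega), pmin_val.1 (Or.inr (by omega))]
          · rw [hpre (m+3) (by omega), gmin_ge2 (by omega), pmin_even (by omega)]
        exact (comp_le hd good_gmin (m+4) hpre (by omega)).2 hno

lemma upper_bound {d : ℕ → ℤ} (h0 : d 0 = 4) (h1 : d 1 = 3)
    (hset : ∀ i, 2 ≤ i → d i ∈ ({1, 2, 3, 4} : Set ℤ))
    (hp5 : ∀ i, ¬(d i = 4 ∧ d (i+1) = 1 ∧ d (i+2) = 4 ∧ d (i+3) = 1 ∧ d (i+4) = 4)) :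
    cfInfVal d ≤ cfInfVal gmax := by
  have hd : Good d := good_of_mem h0 h1 hset
  by_cases hall : ∀ i, d i = gmax i
  · rw [funext hall]
  · push_neg at hall
    obtain ⟨k, hk, hpre⟩ : ∃ k, d k ≠ gmax k ∧ ∀ i < k, d i = gmax i :=
      ⟨Nat.find hall, Nat.find_spec hall, fun i hi => not_not.1 (Nat.find_min hall hi)⟩
    have hg0 : gmax 0 = 4 := by norm_num [gmax]
    have hg1 : gmax 1 = 3 := by norm_num [gmax]
    have hk2 : 2 ≤ k := by
      by_contra hc
      interval_cases k
      · exact hk (by rw [h0, hg0])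
      · exact hk (by rw [h1, hg1])
    have hdig : 1 ≤ d k ∧ d k ≤ 4 := hd k
    rcases Nat.even_or_odd k with he | ho
    · have he2 : k % 2 = 0 := Nat.even_iff.1 he
      have hj : (k-2) % 6 = 0 ∨ (k-2) % 6 = 2 ∨ (k-2) % 6 = 4 := by omega
      rcases hj with hj | hj | hj
      · have hgk : gmax k = 4 := by rw [gmax_ge2 hk2, pmax_val.1 (Or.inl hj)]
        exact (comp_le hd good_gmax k hpre (by omega)).1 he
      · have hgk : gmax k = 4 := by rw [gmax_ge2 hk2, pmax_val.1 (Or.inr hj)]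
        exact (comp_le hd good_gmax k hpre (by omega)).1 he
      · have hgk : gmax k = 3 := by rw [gmax_ge2 hk2, pmax_val.2 hj]
        obtain ⟨m, rfl⟩ : ∃ m, k = m + 4 := ⟨k - 4, by omega⟩
        have hne4 : d (m + 4) ≠ 4 := by
          intro h4
          refine hp5 m ⟨?_, ?_, ?_, ?_, h4⟩
          · rw [hpre m (by omega), gmax_ge2 (by omega), pmax_val.1 (Or.inl (by omega))]
          · rw [hpre (m+1) (by omega), gmax_ge2 (by omega), pmax_odd (by omega)]
          · rw [hpre (m+2) (by omega), gmax_ge2 (by omega), pmax_val.1 (Or.inr (by omega))]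
          · rw [hpre (m+3) (by omega), gmax_ge2 (by omega), pmax_odd (by omega)]
        exact (comp_le hd good_gmax (m+4) hpre (by omega)).1 he
    · have hodd : k % 2 = 1 := Nat.odd_iff.1 ho
      have hno : ¬ Even k := by rw [Nat.even_iff]; omega
      have hgk : gmax k = 1 := by
        rw [gmax_ge2 hk2, pmax_odd (by omega : (k-2) % 2 = 1)]
      exact (comp_le good_gmax hd k (fun i hi => (hpre i hi).symm) (by omega)).2 hno

lemma gmin_mem : (783 + sq) / 222 ∈ F4star := by
  refine ⟨gmin, by norm_num [gmin], by norm_num [gmin], ?_, gmin_pat2, gmin_pat5,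
    cfInfVal_gmin.symm⟩
  intro i hi
  rw [gmin_ge2 hi]
  simp only [Set.mem_insert_iff, Set.mem_singleton_iff]
  unfold pmin; split_ifs <;> simp

lemma gmax_mem : (5501 - sq) / 1238 ∈ F4star := by
  refine ⟨gmax, by norm_num [gmax], by norm_num [gmax], ?_, gmax_pat2, gmax_pat5,
    cfInfVal_gmax.symm⟩
  intro i hi
  rw [gmax_ge2 hi]
  simp only [Set.mem_insert_iff, Set.mem_singleton_iff]
  unfold pmax; split_ifs <;> simp


end CF4

theorem F4star_inf_sup :
    sInf F4star = (783 + Real.sqrt 26565) / 222 ∧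
    sSup F4star = (5501 - Real.sqrt 26565) / 1238 := by
  have hsq : Real.sqrt 26565 = CF4.sq := rfl
  rw [hsq]
  have hlb : ∀ x ∈ F4star, (783 + CF4.sq) / 222 ≤ x := by
    rintro x ⟨d, h0, h1, hset, hp2, hp5, rfl⟩
    rw [← CF4.cfInfVal_gmin]
    exact CF4.lower_bound h0 h1 hset hp5
  have hub : ∀ x ∈ F4star, x ≤ (5501 - CF4.sq) / 1238 := by
    rintro x ⟨d, h0, h1, hset, hp2, hp5, rfl⟩
    rw [← CF4.cfInfVal_gmax]
    exact CF4.upper_bound h0 h1 hset hp5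
  constructor
  · exact le_antisymm (csInf_le ⟨_, hlb⟩ CF4.gmin_mem) (le_csInf ⟨_, CF4.gmin_mem⟩ hlb)
  · exact le_antisymm (csSup_le ⟨_, CF4.gmax_mem⟩ hub) (le_csSup ⟨_, hub⟩ CF4.gmax_mem)
end
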